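/- arXiv:1706.07687 — 5 statements merged into one kernel-verified Lean document; each statement's English description precedes it below -/
import Mathlib

section
/- If K ⊆ ℝⁿ is a detour set, then K has empty interior. -/
open MeasureTheory Metric Set Filter
open scoped ENNReal NNReal Topology

/-- The line through the point `w` in the direction `v`. -/
def lineThrough {n : ℕ} (w v : EuclideanSpace ℝ (Fin n)) : Set (EuclideanSpace ℝ (Fin n)) :=
  {x | ∃ t : ℝ, x = w + t • v}

/-- The line `L` has the detour property with respect to the family `Ω` of complementary
components and the closed ball `B`: for every `ε > 0` there is a path `γ` whose trace lies
within Hausdorff distance `ε` of `L ∩ B`, such that (i) the trace of `γ` is contained in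
`⋃ k, closure (Ω k)`; (ii) `γ` meets only finitely many of the sets `closure (Ω k)`; and
(iii) every `closure (Ω k)` met by `γ` is also met by `L`. -/
def HasDetourProperty {n : ℕ} (Ω : ℕ → Set (EuclideanSpace ℝ (Fin n)))
    (B : Set (EuclideanSpace ℝ (Fin n))) (L : Set (EuclideanSpace ℝ (Fin n))) : Prop :=
  ∀ ε > (0 : ℝ), ∃ γ : ℝ → EuclideanSpace ℝ (Fin n), ContinuousOn γ (Icc 0 1) ∧
    hausdorffDist (γ '' Icc 0 1) (L ∩ B) ≤ ε ∧
    γ '' Icc 0 1 ⊆ ⋃ k, closure (Ω k) ∧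
    {k | (γ '' Icc 0 1 ∩ closure (Ω k)).Nonempty}.Finite ∧
    {k | (γ '' Icc 0 1 ∩ closure (Ω k)).Nonempty} ⊆ {k | (L ∩ closure (Ω k)).Nonempty}

/-- `K` is a detour set with complementary components `Ω 0, Ω 1, Ω 2, …`:
`K` is compact, `Ω` is an injective enumeration of the (infinitely many) connected components
of the complement of `K`, with `Ω 0` the unbounded component and `Ω k`, `k ≥ 1`, the bounded
ones, and there exist a closed ball `B` containing `K` in its interior and `n` linearly
independent directions such that, for each of these directions, almost every line parallel to
it (lines parallel to `v` being parametrized by the points of the orthogonal complement of `v`,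
equipped with its Lebesgue measure) has the detour property. -/
structure IsDetourSet (n : ℕ) (K : Set (EuclideanSpace ℝ (Fin n)))
    (Ω : ℕ → Set (EuclideanSpace ℝ (Fin n))) : Prop where
  compact : IsCompact K
  inj : Function.Injective Ω
  component : ∀ k, ∃ x ∈ Kᶜ, Ω k = connectedComponentIn Kᶜ x
  surj : ∀ x ∈ Kᶜ, ∃ k, Ω k = connectedComponentIn Kᶜ x
  unbounded : ¬ Bornology.IsBounded (Ω 0)
  bounded : ∀ k : ℕ, k ≠ 0 → Bornology.IsBounded (Ω k)
  detour : ∃ (x : EuclideanSpace ℝ (Fin n)) (r : ℝ), 0 < r ∧ K ⊆ ball x r ∧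
    ∃ v : Fin n → EuclideanSpace ℝ (Fin n), LinearIndependent ℝ v ∧
      ∀ i : Fin n, ∀ᵐ w : ↥(Submodule.span ℝ {v i})ᗮ,
        HasDetourProperty Ω (closedBall x r)
          (lineThrough (w : EuclideanSpace ℝ (Fin n)) (v i))

/-! If a ball `B(x, δ)` lay in `K`, then, the good lines in a direction `v` being dense among all
lines parallel to `v`, one of them would pass through `B(x, δ)` at some point `y`. A detour path
along that line comes arbitrarily close to `y` while staying in `⋃ k, closure (Ω k) ⊆ closure Kᶜ`,
so `y ∈ closure Kᶜ`, which is disjoint from `interior K`. -/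

section Detour

variable {n : ℕ} {Ω : ℕ → Set (EuclideanSpace ℝ (Fin n))}
  {B L : Set (EuclideanSpace ℝ (Fin n))}

theorem HasDetourProperty.inter_subset_closure_iUnion (hL : HasDetourProperty Ω B L)
    (hB : Bornology.IsBounded B) : L ∩ B ⊆ closure (⋃ k, closure (Ω k)) := by
  intro y hy
  refine Metric.mem_closure_iff.mpr fun ε hε => ?_
  obtain ⟨γ, hγ, hdist, hsub, -, -⟩ := hL (ε / 2) (by positivity)
  have htrace_ne : (γ '' Icc 0 1).Nonempty := (nonempty_Icc.mpr zero_le_one).image γ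
  have hfin : hausdorffEDist (γ '' Icc 0 1) (L ∩ B) ≠ ⊤ :=
    hausdorffEDist_ne_top_of_nonempty_of_bounded htrace_ne ⟨y, hy⟩
      (isCompact_Icc.image_of_continuousOn hγ).isBounded (hB.subset inter_subset_right)
  obtain ⟨z, hz, hzy⟩ :=
    exists_dist_lt_of_hausdorffDist_lt' hy (hdist.trans_lt (half_lt_self hε)) hfin
  exact ⟨z, hsub hz, by rwa [dist_comm]⟩

theorem HasDetourProperty.disjoint_interior {K : Set (EuclideanSpace ℝ (Fin n))}
    (hL : HasDetourProperty Ω B L) (hB : Bornology.IsBounded B) (hΩ : ∀ k, Ω k ⊆ Kᶜ) :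
    Disjoint (L ∩ B) (interior K) := by
  have hclosure : closure (⋃ k, closure (Ω k)) ⊆ closure Kᶜ :=
    closure_minimal (iUnion_subset fun k => closure_mono (hΩ k)) isClosed_closure
  rw [← compl_compl (interior K), ← closure_compl, disjoint_compl_right_iff_subset]
  exact (hL.inter_subset_closure_iUnion hB).trans hclosure

end Detour

theorem exists_mem_lineThrough_dist_eq {n : ℕ} (v x : EuclideanSpace ℝ (Fin n))
    (w : (Submodule.span ℝ {v})ᗮ) :
    ∃ y ∈ lineThrough (w : EuclideanSpace ℝ (Fin n)) v,
      dist y x = dist w ((Submodule.span ℝ {v})ᗮ.orthogonalProjectionOnto x) := by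
  obtain ⟨t, ht⟩ := Submodule.mem_span_singleton.mp
    ((Submodule.span ℝ {v}).orthogonalProjectionOnto x).2
  have hx : t • v + ((Submodule.span ℝ {v})ᗮ.orthogonalProjectionOnto x :
      EuclideanSpace ℝ (Fin n)) = x := by
    rw [ht]; exact Submodule.starProjection_add_starProjection_orthogonal x
  refine ⟨w + t • v, ⟨t, rfl⟩, ?_⟩
  rw [Subtype.dist_eq, dist_eq_norm, dist_eq_norm]
  conv_lhs => rw [← hx]
  congr 1; abel

theorem IsDetourSet.subset_compl {n : ℕ} {K : Set (EuclideanSpace ℝ (Fin n))}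
    {Ω : ℕ → Set (EuclideanSpace ℝ (Fin n))} (hK : IsDetourSet n K Ω) (k : ℕ) : Ω k ⊆ Kᶜ := by
  obtain ⟨p, -, hp⟩ := hK.component k
  exact hp ▸ connectedComponentIn_subset _ _

theorem statement0 {n : ℕ} (K : Set (EuclideanSpace ℝ (Fin n)))
    (Ω : ℕ → Set (EuclideanSpace ℝ (Fin n))) (hK : IsDetourSet n K Ω) :
    interior K = ∅ := by
  by_contra hne
  obtain ⟨x, hx⟩ := nonempty_iff_ne_empty.mpr hne
  obtain ⟨δ, hδ, hball⟩ := Metric.isOpen_iff.mp isOpen_interior x hx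
  rcases n.eq_zero_or_pos with rfl | hn
  · -- no direction to use, but in dimension 0 the unbounded component cannot exist
    exact hK.unbounded subsingleton_of_subsingleton.finite.isBounded
  obtain ⟨x₀, r₀, -, hKB, v, -, hdetour⟩ := hK.detour
  let i : Fin n := ⟨0, hn⟩
  obtain ⟨w, hw, hdist⟩ := (Measure.dense_of_ae (hdetour i)).exists_dist_lt
    ((Submodule.span ℝ {v i})ᗮ.orthogonalProjectionOnto x) hδ
  obtain ⟨y, hyL, hyx⟩ := exists_mem_lineThrough_dist_eq (v i) x w
  have hyK : y ∈ interior K := hball (mem_ball.mpr (hyx.trans_lt (by rwa [dist_comm])))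
  have hyB : y ∈ closedBall x₀ r₀ := ball_subset_closedBall (hKB (interior_subset hyK))
  exact (hw.disjoint_interior isBounded_closedBall hK.subset_compl).le_bot ⟨⟨hyL, hyB⟩, hyK⟩
end

section
/- Let K ⊆ ℝ² be a detour set whose complementary components are Jordan regions when regarded as subsets of the Riemann sphere (i.e., each bounded component Ω_k, k ≥ 1, is a Jordan region, and the unbounded component Ω₀ is an unbounded Jordan region). Then K is connected. -/
open MeasureTheory Metric Set Filter
open scoped ENNReal NNReal Topology

/-- A Jordan curve in the plane: the homeomorphic (equivalently, continuous injective) image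
of a circle. -/
def IsJordanCurve (J : Set (EuclideanSpace ℝ (Fin 2))) : Prop :=
  ∃ f : Metric.sphere (0 : EuclideanSpace ℝ (Fin 2)) 1 → EuclideanSpace ℝ (Fin 2),
    Continuous f ∧ Function.Injective f ∧ Set.range f = J

/-- A Jordan region: an open subset of the plane whose boundary is a Jordan curve. -/
def IsJordanRegion (Ω : Set (EuclideanSpace ℝ (Fin 2))) : Prop :=
  IsOpen Ω ∧ IsJordanCurve (frontier Ω)

/-- An unbounded Jordan region: `∂Ω` is a Jordan curve and `Ω` is the unbounded connected
component of the complement of `∂Ω`. -/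
def IsUnboundedJordanRegion (Ω : Set (EuclideanSpace ℝ (Fin 2))) : Prop :=
  IsJordanCurve (frontier Ω) ∧ ¬ Bornology.IsBounded Ω ∧
    ∃ x ∈ Ω, Ω = connectedComponentIn (frontier Ω)ᶜ x


/-!
The boundary of every component of `Kᶜ` is a Jordan curve, hence a connected subset of `K`.
So if `K = F₁ ∪ F₂` with `F₁`, `F₂` disjoint, closed and nonempty, each such boundary lies in
`F₁` or in `F₂`. Adding to each `Fᵢ` the components whose boundary lies in `Fᵢ` splits the
plane into two disjoint nonempty closed sets, which is impossible.
-/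

section ComplementaryComponents

variable {X : Type*} [TopologicalSpace X] [LocallyConnectedSpace X]

theorem IsOpen.frontier_connectedComponentIn_subset_compl {U : Set X} (hU : IsOpen U) (x : X) :
    frontier (connectedComponentIn U x) ⊆ Uᶜ := by
  intro y hy hyU
  obtain ⟨z, hzy, hzx⟩ :=
    mem_closure_iff.mp hy.1 _ hU.connectedComponentIn (mem_connectedComponentIn hyU)
  have hyx : y ∈ connectedComponentIn U x := by
    rw [connectedComponentIn_eq hzx, ← connectedComponentIn_eq hzy]
    exact mem_connectedComponentIn hyU
  exact hy.2 (hU.connectedComponentIn.interior_eq.symm ▸ hyx)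

/-- `F` together with the components of `Kᶜ` whose boundary lies in `F`. -/
def fillComponents (K F : Set X) : Set X :=
  F ∪ {x | x ∉ K ∧ frontier (connectedComponentIn Kᶜ x) ⊆ F}

theorem isClosed_fillComponents {K F : Set X} (hK : IsClosed K) (hF : IsClosed F) :
    IsClosed (fillComponents K F) := by
  rw [← isOpen_compl_iff, isOpen_iff_forall_mem_open]
  intro x hx
  have hxF : x ∉ F := fun h => hx (Or.inl h)
  refine ⟨connectedComponentIn Fᶜ x, ?_, hF.isOpen_compl.connectedComponentIn,
    mem_connectedComponentIn hxF⟩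
  rintro y hy (hyF | ⟨hyK, hfrF⟩)
  · exact connectedComponentIn_subset _ _ hy hyF
  -- The component of `Fᶜ` through `x` and `y` misses `frontier Cy`, so it stays inside `Cy`.
  set Cy := connectedComponentIn Kᶜ y
  have hsub : connectedComponentIn Fᶜ x ⊆ Cy := by
    refine isPreconnected_connectedComponentIn.subset_of_closure_inter_subset
      hK.isOpen_compl.connectedComponentIn ⟨y, hy, mem_connectedComponentIn hyK⟩ ?_
    rintro z ⟨hzC, hzN⟩
    by_contra hzCy
    have hz : z ∈ frontier Cy := ⟨hzC, by rwa [hK.isOpen_compl.connectedComponentIn.interior_eq]⟩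
    exact connectedComponentIn_subset _ _ hzN (hfrF hz)
  have hxCy : x ∈ Cy := hsub (mem_connectedComponentIn hxF)
  have hxK : x ∉ K := connectedComponentIn_subset _ _ hxCy
  exact hx (Or.inr ⟨hxK, connectedComponentIn_eq hxCy ▸ hfrF⟩)

theorem IsClosed.isPreconnected_of_isPreconnected_frontier [ConnectedSpace X] {K : Set X}
    (hK : IsClosed K)
    (hfr : ∀ x ∉ K, IsPreconnected (frontier (connectedComponentIn Kᶜ x))) :
    IsPreconnected K := by
  rw [isPreconnected_iff_subset_of_fully_disjoint_closed hK]
  intro u v hu hv hKuv huv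
  by_contra! h
  obtain ⟨⟨a, haK, hau⟩, ⟨b, hbK, hbv⟩⟩ := h.imp not_subset.mp not_subset.mp
  have hside : ∀ x ∉ K, frontier (connectedComponentIn Kᶜ x) ⊆ K ∩ u ∨
      frontier (connectedComponentIn Kᶜ x) ⊆ K ∩ v := by
    intro x hx
    have hfrK := hK.isOpen_compl.frontier_connectedComponentIn_subset_compl x
    rw [compl_compl] at hfrK
    rcases isPreconnected_iff_subset_of_disjoint_closed.mp (hfr x hx) u v hu hv
      (hfrK.trans hKuv) (by rw [huv.inter_eq, inter_empty]) with h | h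
    exacts [Or.inl (subset_inter hfrK h), Or.inr (subset_inter hfrK h)]
  have hcover : univ ⊆ fillComponents K (K ∩ u) ∪ fillComponents K (K ∩ v) := by
    intro x _
    by_cases hx : x ∈ K
    · rcases hKuv hx with h | h
      exacts [Or.inl (Or.inl ⟨hx, h⟩), Or.inr (Or.inl ⟨hx, h⟩)]
    · rcases hside x hx with h | h
      exacts [Or.inl (Or.inr ⟨hx, h⟩), Or.inr (Or.inr ⟨hx, h⟩)]
  have hdisj : Disjoint (fillComponents K (K ∩ u)) (fillComponents K (K ∩ v)) := by
    rw [Set.disjoint_left]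
    rintro x (⟨hxK, hxu⟩ | ⟨hxK, hxu⟩) (⟨hxK', hxv⟩ | ⟨hxK', hxv⟩)
    · exact huv.ne_of_mem hxu hxv rfl
    · exact hxK' hxK
    · exact hxK hxK'
    · have hne : (frontier (connectedComponentIn Kᶜ x)).Nonempty :=
        nonempty_frontier_iff.mpr ⟨⟨x, mem_connectedComponentIn hxK⟩,
          ne_univ_iff_exists_notMem _ |>.mpr ⟨a, fun ha => connectedComponentIn_subset _ _ ha haK⟩⟩
      obtain ⟨y, hy⟩ := hne
      exact huv.ne_of_mem (hxu hy).2 (hxv hy).2 rfl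
  rcases (isPreconnected_iff_subset_of_fully_disjoint_closed isClosed_univ).mp
    isPreconnected_univ _ _ (isClosed_fillComponents hK (hK.inter hu))
    (isClosed_fillComponents hK (hK.inter hv)) hcover hdisj with h | h
  · rcases h (mem_univ a) with ⟨-, ha⟩ | ⟨ha, -⟩
    exacts [hau ha, ha haK]
  · rcases h (mem_univ b) with ⟨-, hb⟩ | ⟨hb, -⟩
    exacts [hbv hb, hb hbK]

end ComplementaryComponents

theorem IsJordanCurve.isConnected {J : Set (EuclideanSpace ℝ (Fin 2))} (hJ : IsJordanCurve J) :
    IsConnected J := by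
  obtain ⟨f, hf, -, rfl⟩ := hJ
  have : ConnectedSpace (sphere (0 : EuclideanSpace ℝ (Fin 2)) 1) :=
    isConnected_iff_connectedSpace.mp <| isConnected_sphere (by
      rw [← Module.finrank_eq_rank, finrank_euclideanSpace_fin]; norm_num) 0 zero_le_one
  exact isConnected_range hf

theorem statement1 (K : Set (EuclideanSpace ℝ (Fin 2)))
    (Ω : ℕ → Set (EuclideanSpace ℝ (Fin 2))) (hK : IsDetourSet 2 K Ω)
    (h0 : IsUnboundedJordanRegion (Ω 0))
    (hk : ∀ k : ℕ, k ≠ 0 → IsJordanRegion (Ω k)) :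
    IsConnected K := by
  have hfr : ∀ x ∉ K, IsConnected (frontier (connectedComponentIn Kᶜ x)) := by
    intro x hx
    obtain ⟨k, hkx⟩ := hK.surj x hx
    rw [← hkx]
    rcases eq_or_ne k 0 with rfl | hk0
    exacts [h0.1.isConnected, (hk k hk0).2.isConnected]
  refine ⟨?_, hK.compact.isClosed.isPreconnected_of_isPreconnected_frontier
    fun x hx => (hfr x hx).isPreconnected⟩
  by_contra hKe
  rw [not_nonempty_iff_eq_empty] at hKe
  have := (hfr 0 (by simp [hKe])).nonempty
  simp [hKe, connectedComponentIn_univ] at this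
end

section
/- Let D ⊆ ℝⁿ be an (α,c)-Hölder domain with basepoint x₀, let W(D) be a Whitney decomposition of D, and fix β > 0. Then there exists a constant C depending only on α, c, n, β such that for every quasihyperbolic geodesic γ starting at x₀, Σ_{Q ∈ W(D), Q ∩ γ ≠ ∅} ℓ(Q)^β ≤ C · δ_D(x₀)^β. -/
open MeasureTheory Metric Set Filter
open scoped ENNReal NNReal Topology

/-- The distance `δ_D(x)` of `x` to the boundary of `D`. -/
noncomputable def distBoundary {n : ℕ} (D : Set (EuclideanSpace ℝ (Fin n)))
    (x : EuclideanSpace ℝ (Fin n)) : ℝ :=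
  Metric.infDist x (frontier D)

/-- The quasihyperbolic distance between two points of `D`: the infimum, over all rectifiable
paths in `D` joining `x` to `y` (parametrized by arclength, i.e. `1`-Lipschitz on `[0, L]`),
of the arclength integral of `1 / δ_D` along the path. -/
noncomputable def qhDist {n : ℕ} (D : Set (EuclideanSpace ℝ (Fin n)))
    (x y : EuclideanSpace ℝ (Fin n)) : ℝ≥0∞ :=
  ⨅ (L : ℝ) (γ : ℝ → EuclideanSpace ℝ (Fin n)) (_ : 0 ≤ L)
    (_ : LipschitzOnWith 1 γ (Icc 0 L)) (_ : γ 0 = x) (_ : γ L = y)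
    (_ : γ '' Icc 0 L ⊆ D),
    ∫⁻ t in Icc 0 L, ENNReal.ofReal (1 / distBoundary D (γ t))

/-- `D` is an `(α, c)`-Hölder domain with basepoint `x₀`: `D` is open, `x₀ ∈ D`,
`α ∈ (0, 1]`, `c > 0`, and `k_D(x, x₀) ≤ (1/α) log (δ_D(x₀) / δ_D(x)) + c` for all `x ∈ D`. -/
structure IsHolderDomain {n : ℕ} (D : Set (EuclideanSpace ℝ (Fin n))) (α c : ℝ)
    (x₀ : EuclideanSpace ℝ (Fin n)) : Prop where
  isOpen : IsOpen D
  basepoint_mem : x₀ ∈ D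
  alpha_pos : 0 < α
  alpha_le_one : α ≤ 1
  c_pos : 0 < c
  qh_bound : ∀ x ∈ D, qhDist D x x₀ ≤
    ENNReal.ofReal ((1 / α) * Real.log (distBoundary D x₀ / distBoundary D x) + c)

/-- A quasihyperbolic geodesic in `D`, parametrized by arclength on `[0, L]`: a `1`-Lipschitz
curve in `D` such that for any two points on the curve their quasihyperbolic distance equals
the integral of `1 / δ_D` over the subpath between them. -/
structure IsQHGeodesic {n : ℕ} (D : Set (EuclideanSpace ℝ (Fin n))) (L : ℝ)
    (γ : ℝ → EuclideanSpace ℝ (Fin n)) : Prop where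
  nonneg : 0 ≤ L
  lipschitz : LipschitzOnWith 1 γ (Icc 0 L)
  mem : γ '' Icc 0 L ⊆ D
  geodesic : ∀ s ∈ Icc 0 L, ∀ t ∈ Icc 0 L, s ≤ t →
    qhDist D (γ s) (γ t) = ∫⁻ u in Icc s t, ENNReal.ofReal (1 / distBoundary D (γ u))

/-- A closed dyadic cube in `ℝⁿ`, determined by a scale `j ∈ ℤ` (the sidelength is `2 ^ j`)
and a corner `m ∈ ℤⁿ`. -/
structure DyadicCube (n : ℕ) where
  j : ℤ
  m : Fin n → ℤ

/-- The sidelength `ℓ(Q) = 2 ^ j` of a dyadic cube. -/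
noncomputable def DyadicCube.len {n : ℕ} (Q : DyadicCube n) : ℝ := 2 ^ Q.j

/-- The dyadic cube `Q`, as a subset of `ℝⁿ`. -/
def DyadicCube.set {n : ℕ} (Q : DyadicCube n) : Set (EuclideanSpace ℝ (Fin n)) :=
  {x | ∀ i : Fin n, (Q.m i : ℝ) * 2 ^ Q.j ≤ x i ∧ x i ≤ ((Q.m i : ℝ) + 1) * 2 ^ Q.j}

/-- A face of a dyadic cube: the points of the cube whose `i`-th coordinate is extremal
(the top one if `top = true`, the bottom one otherwise). -/
def DyadicCube.face {n : ℕ} (Q : DyadicCube n) (i : Fin n) (top : Bool) :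
    Set (EuclideanSpace ℝ (Fin n)) :=
  {x ∈ Q.set | x i = (if top then (Q.m i : ℝ) + 1 else (Q.m i : ℝ)) * 2 ^ Q.j}

/-- Two cubes are adjacent if a face of the smaller one is contained in a face of the
larger one. -/
def DyadicCube.Adjacent {n : ℕ} (Q₁ Q₂ : DyadicCube n) : Prop :=
  (Q₂.len ≤ Q₁.len ∧ ∃ i b i' b', Q₂.face i b ⊆ Q₁.face i' b') ∨
  (Q₁.len ≤ Q₂.len ∧ ∃ i b i' b', Q₁.face i b ⊆ Q₂.face i' b')

/-- A (refined) Whitney decomposition of an open set `D`: a family of closed dyadic cubes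
contained in `D`, with pairwise disjoint interiors, covering `D`, whose sidelengths are
comparable (with dimensional constants) to the distance to the boundary, such that the
sidelengths of intersecting cubes differ by a factor of at most `4`, and such that the
quasihyperbolic diameter of each cube is at most `1/3`. -/
structure IsWhitneyDecomposition (n : ℕ) (D : Set (EuclideanSpace ℝ (Fin n)))
    (W : Set (DyadicCube n)) : Prop where
  subset : ∀ Q ∈ W, Q.set ⊆ D
  covers : D = ⋃ Q ∈ W, Q.set
  disjoint_interiors : ∀ Q₁ ∈ W, ∀ Q₂ ∈ W, Q₁ ≠ Q₂ →
    interior Q₁.set ∩ interior Q₂.set = ∅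
  comparable : ∀ Q ∈ W, ∀ x ∈ Q.set,
    Q.len ≤ distBoundary D x ∧ distBoundary D x ≤ 6 * Real.sqrt n * Q.len
  len_ratio : ∀ Q₁ ∈ W, ∀ Q₂ ∈ W, (Q₁.set ∩ Q₂.set).Nonempty → Q₁.len ≤ 4 * Q₂.len
  qh_small : ∀ Q ∈ W, ∀ x₁ ∈ Q.set, ∀ x₂ ∈ Q.set, qhDist D x₁ x₂ ≤ ENNReal.ofReal (1 / 3)

/-!
Along a quasihyperbolic geodesic `γ` from `x₀`, the Hölder condition gives exponential decay
`δ_D(γ t) ≲ δ_D(x₀) e^{-α k_D(x₀, γ t)}`. Group the Whitney cubes met by `γ` into bands according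
to `⌊k_D(x₀, γ t)⌋` at a meeting time `t`. Two points of the geodesic in the same band are at
quasihyperbolic distance at most `1`, so their distances to the boundary are comparable and they
are Euclidean-close; hence the cubes of the `k`-th band have sidelength comparable to some `d_k`,
lie in a ball of radius `≲ d_k`, and by volume packing contribute `≲ d_k^β ≲ δ_D(x₀)^β e^{-αβk}`.
Summing the geometric series over `k` gives the bound.
-/

open Real Function

lemma rpow_le_max_mul_rpow {x a b d : ℝ} (hx : 0 < x) (hd : 0 < d) (hdx : d ≤ a * x)
    (hxd : x ≤ b * d) (e : ℝ) : x ^ e ≤ max (b ^ e) (a ^ (-e)) * d ^ e := by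
  have ha : 0 < a := pos_of_mul_pos_left (hd.trans_le hdx) hx.le
  have hb : 0 < b := pos_of_mul_pos_left (hx.trans_le hxd) hd.le
  rcases le_total 0 e with he | he
  · calc x ^ e ≤ (b * d) ^ e := Real.rpow_le_rpow hx.le hxd he
      _ = b ^ e * d ^ e := Real.mul_rpow hb.le hd.le
      _ ≤ _ := by gcongr; exact le_max_left _ _
  · calc x ^ e ≤ (d / a) ^ e := Real.rpow_le_rpow_of_nonpos (by positivity)
          ((div_le_iff₀' ha).2 hdx) he
      _ = a ^ (-e) * d ^ e := by
          rw [Real.div_rpow hd.le ha.le, Real.rpow_neg ha.le]; ring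
      _ ≤ _ := by gcongr; exact le_max_right _ _

lemma lintegral_Icc_inv_add_sub {A a b : ℝ} (hA : 0 < A) (hab : a ≤ b) :
    ∫⁻ u in Icc a b, ENNReal.ofReal ((A + (u - a))⁻¹) = ENNReal.ofReal (log (1 + (b - a) / A)) := by
  have hpos : ∀ u ∈ Icc a b, 0 < A + (u - a) := fun u hu => by linarith [hu.1]
  have hint : IntegrableOn (fun u => (A + (u - a))⁻¹) (Icc a b) :=
    (continuousOn_const.add (continuousOn_id.sub continuousOn_const)).inv₀
      (fun u hu => (hpos u hu).ne') |>.integrableOn_Icc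
  rw [← ofReal_integral_eq_lintegral_ofReal hint
    ((ae_restrict_iff' measurableSet_Icc).2 (ae_of_all _ fun u hu => (inv_pos.2 (hpos u hu)).le)),
    integral_Icc_eq_integral_Ioc, ← intervalIntegral.integral_of_le hab]
  have hshift : (fun u => (A + (u - a))⁻¹) = fun u => (u + (A - a))⁻¹ := by ext; ring_nf
  rw [hshift, intervalIntegral.integral_comp_add_right (fun v => v⁻¹),
    integral_inv_of_pos (by linarith) (by linarith), show a + (A - a) = A by ring,
    show b + (A - a) = A + (b - a) by ring, add_div, div_self hA.ne']

lemma ENNReal.tsum_le_mul_inv_one_sub_of_fiber_le {ι : Type*} (g : ι → ℝ≥0∞) (κ : ι → ℕ)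
    (a b : ℝ≥0∞) (h : ∀ k, ∑' i : {i // κ i = k}, g i ≤ a * b ^ k) :
    ∑' i, g i ≤ a * (1 - b)⁻¹ :=
  calc ∑' i, g i = ∑' (k : ℕ) (i : {i // κ i = k}), g i := by
        rw [← (Equiv.sigmaFiberEquiv κ).tsum_eq g, ENNReal.tsum_sigma']
        rfl
    _ ≤ ∑' k : ℕ, a * b ^ k := ENNReal.tsum_le_tsum h
    _ = a * (1 - b)⁻¹ := by rw [ENNReal.tsum_mul_left, ENNReal.tsum_geometric]

instance {n : ℕ} : Countable (DyadicCube n) :=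
  Function.Injective.countable (f := fun Q : DyadicCube n => (Q.j, Q.m)) fun Q Q' h => by
    cases Q; cases Q'; simp_all

namespace DyadicCube

variable {n : ℕ}

lemma len_pos (Q : DyadicCube n) : 0 < Q.len := zpow_pos two_pos _

lemma dist_le_of_mem (Q : DyadicCube n) {x y : EuclideanSpace ℝ (Fin n)}
    (hx : x ∈ Q.set) (hy : y ∈ Q.set) : dist x y ≤ √n * Q.len := by
  have hcoord : ∀ i, dist (x i) (y i) ^ 2 ≤ Q.len ^ 2 := fun i => by
    have hxy : |x i - y i| ≤ Q.len := by
      rw [abs_le, len]; constructor <;> nlinarith [hx i, hy i]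
    rw [Real.dist_eq]
    exact pow_le_pow_left₀ (abs_nonneg _) hxy 2
  calc dist x y = √(∑ i, dist (x i) (y i) ^ 2) := EuclideanSpace.dist_eq x y
    _ ≤ √(∑ _i : Fin n, Q.len ^ 2) := Real.sqrt_le_sqrt (Finset.sum_le_sum fun i _ => hcoord i)
    _ = √n * Q.len := by
      simp [Real.sqrt_mul (Nat.cast_nonneg n), Real.sqrt_sq Q.len_pos.le]

lemma ofReal_len_pow_le_volume_interior (Q : DyadicCube n) :
    ENNReal.ofReal (Q.len ^ n) ≤ volume (interior Q.set) := by
  let e := MeasurableEquiv.toLp 2 (Fin n → ℝ)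
  let box : Set (Fin n → ℝ) := univ.pi fun i => Ioo ((Q.m i : ℝ) * 2 ^ Q.j) ((Q.m i + 1) * 2 ^ Q.j)
  have hbox : e.symm ⁻¹' box ⊆ interior Q.set := by
    refine interior_maximal (fun x hx i => ?_) ?_
    · exact ⟨(hx i (mem_univ i)).1.le, (hx i (mem_univ i)).2.le⟩
    · exact (isOpen_set_pi finite_univ fun i _ => isOpen_Ioo).preimage (PiLp.continuous_ofLp 2 _)
  calc ENNReal.ofReal (Q.len ^ n) = volume (e.symm ⁻¹' box) := by
        rw [(EuclideanSpace.volume_preserving_symm_measurableEquiv_toLp (Fin n)).measure_preimage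
          (MeasurableSet.univ_pi fun i => measurableSet_Ioo).nullMeasurableSet, volume_pi_pi]
        have hside : ∀ i, ((Q.m i : ℝ) + 1) * 2 ^ Q.j - Q.m i * 2 ^ Q.j = Q.len := fun i => by
          rw [len]; ring
        simp only [Real.volume_Ioo, hside, Finset.prod_const, Finset.card_univ, Fintype.card_fin,
          ENNReal.ofReal_pow Q.len_pos.le]
    _ ≤ volume (interior Q.set) := measure_mono hbox

lemma tsum_ofReal_len_pow_le_volume {ι : Type*} [Countable ι] {Q : ι → DyadicCube n}
    (hdisj : Pairwise (Disjoint on fun i => interior (Q i).set))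
    {U : Set (EuclideanSpace ℝ (Fin n))} (hU : ∀ i, (Q i).set ⊆ U) :
    ∑' i, ENNReal.ofReal ((Q i).len ^ n) ≤ volume U :=
  calc ∑' i, ENNReal.ofReal ((Q i).len ^ n) ≤ ∑' i, volume (interior (Q i).set) :=
        ENNReal.tsum_le_tsum fun i => (Q i).ofReal_len_pow_le_volume_interior
    _ = volume (⋃ i, interior (Q i).set) :=
        (measure_iUnion hdisj fun _ => isOpen_interior.measurableSet).symm
    _ ≤ volume U := measure_mono (iUnion_subset fun i => interior_subset.trans (hU i))

lemma tsum_ofReal_len_rpow_le {ι : Type*} [Countable ι] {Q : ι → DyadicCube n}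
    (hdisj : Pairwise (Disjoint on fun i => interior (Q i).set))
    {z : EuclideanSpace ℝ (Fin n)} {a b R d : ℝ} (hR : 0 ≤ R) (hd : 0 < d)
    (hlen : ∀ i, d ≤ a * (Q i).len ∧ (Q i).len ≤ b * d)
    (hsub : ∀ i, (Q i).set ⊆ closedBall z (R * d)) (β : ℝ) :
    ∑' i, ENNReal.ofReal ((Q i).len ^ β) ≤
      ENNReal.ofReal (max (b ^ (β - n)) (a ^ (n - β)) * R ^ n *
        (volume (ball (0 : EuclideanSpace ℝ (Fin n)) 1)).toReal * d ^ β) := by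
  rcases isEmpty_or_nonempty ι with hι | ⟨⟨i₀⟩⟩
  · simp
  have hℓ₀ := (Q i₀).len_pos
  have ha : 0 < a := pos_of_mul_pos_left (hd.trans_le (hlen i₀).1) hℓ₀.le
  set K := max (b ^ (β - n)) (a ^ (n - β))
  have hK : 0 ≤ K := le_max_of_le_right (Real.rpow_nonneg ha.le _)
  have hpoint : ∀ i, (Q i).len ^ β ≤ K * d ^ (β - n) * (Q i).len ^ n := fun i => by
    have hℓ := (Q i).len_pos
    have h := rpow_le_max_mul_rpow hℓ hd (hlen i).1 (hlen i).2 (β - n)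
    rw [neg_sub] at h
    calc (Q i).len ^ β = (Q i).len ^ (β - n) * (Q i).len ^ n := by
          rw [Real.rpow_sub_natCast hℓ.ne', div_mul_cancel₀ _ (by positivity)]
      _ ≤ K * d ^ (β - n) * (Q i).len ^ n := by gcongr
  have hball : volume (closedBall z (R * d)) =
      ENNReal.ofReal ((R * d) ^ n) *
        ENNReal.ofReal (volume (ball (0 : EuclideanSpace ℝ (Fin n)) 1)).toReal := by
    rw [Measure.addHaar_closedBall _ _ (by positivity), finrank_euclideanSpace_fin,
      ENNReal.ofReal_toReal measure_ball_lt_top.ne]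
  calc ∑' i, ENNReal.ofReal ((Q i).len ^ β)
      ≤ ∑' i, ENNReal.ofReal (K * d ^ (β - n)) * ENNReal.ofReal ((Q i).len ^ n) :=
        ENNReal.tsum_le_tsum fun i => by
          rw [← ENNReal.ofReal_mul (by positivity)]; exact ENNReal.ofReal_le_ofReal (hpoint i)
    _ = ENNReal.ofReal (K * d ^ (β - n)) * ∑' i, ENNReal.ofReal ((Q i).len ^ n) :=
        ENNReal.tsum_mul_left
    _ ≤ ENNReal.ofReal (K * d ^ (β - n)) * volume (closedBall z (R * d)) := by
        gcongr; exact tsum_ofReal_len_pow_le_volume hdisj hsub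
    _ = _ := by
        rw [hball, ← ENNReal.ofReal_mul (by positivity), ← ENNReal.ofReal_mul (by positivity)]
        congr 1
        rw [mul_pow, Real.rpow_sub_natCast hd.ne']
        field_simp

end DyadicCube

section Quasihyperbolic

variable {n : ℕ} {D : Set (EuclideanSpace ℝ (Fin n))}

lemma qhDist_le_lintegral {x y : EuclideanSpace ℝ (Fin n)} {L : ℝ}
    {γ : ℝ → EuclideanSpace ℝ (Fin n)} (hL : 0 ≤ L) (hγ : LipschitzOnWith 1 γ (Icc 0 L))
    (hx : γ 0 = x) (hy : γ L = y) (hD : γ '' Icc 0 L ⊆ D) :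
    qhDist D x y ≤ ∫⁻ t in Icc 0 L, ENNReal.ofReal (1 / distBoundary D (γ t)) :=
  iInf₂_le_of_le L γ <| iInf₂_le_of_le hL hγ <| iInf₂_le_of_le hx hy <| iInf_le _ hD

lemma le_qhDist {x y : EuclideanSpace ℝ (Fin n)} {e : ℝ≥0∞}
    (h : ∀ (L : ℝ) (γ : ℝ → EuclideanSpace ℝ (Fin n)), 0 ≤ L →
      LipschitzOnWith 1 γ (Icc 0 L) → γ 0 = x → γ L = y → γ '' Icc 0 L ⊆ D →
      e ≤ ∫⁻ t in Icc 0 L, ENNReal.ofReal (1 / distBoundary D (γ t))) :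
    e ≤ qhDist D x y :=
  le_iInf₂ fun L γ => le_iInf₂ fun hL hγ => le_iInf₂ fun hx hy => le_iInf (h L γ hL hγ hx hy)

lemma qhDist_le_qhDist_swap (x y : EuclideanSpace ℝ (Fin n)) : qhDist D x y ≤ qhDist D y x := by
  refine le_qhDist fun L γ hL hγ hy hx hD => ?_
  have hrev : MapsTo (fun t => L - t) (Icc 0 L) (Icc 0 L) := fun t ht =>
    ⟨by linarith [ht.2], by linarith [ht.1]⟩
  have hpre : (fun t => L - t) ⁻¹' Icc 0 L = Icc 0 L := by
    rw [preimage_const_sub_Icc, sub_zero, sub_self]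
  calc qhDist D x y ≤ ∫⁻ t in Icc 0 L, ENNReal.ofReal (1 / distBoundary D (γ (L - t))) := by
        refine qhDist_le_lintegral hL ?_ (by simpa using hx) (by simpa using hy) ?_
        · refine LipschitzOnWith.of_dist_le_mul fun s hs t ht => ?_
          simpa only [dist_sub_left] using hγ.dist_le_mul _ (hrev hs) _ (hrev ht)
        · exact (image_comp γ _ _).symm ▸ (image_mono (mapsTo_iff_image_subset.1 hrev)).trans hD
    _ = ∫⁻ t in (fun t => L - t) ⁻¹' Icc 0 L,
          ENNReal.ofReal (1 / distBoundary D (γ (L - t))) := by rw [hpre]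
    _ = ∫⁻ t in Icc 0 L, ENNReal.ofReal (1 / distBoundary D (γ t)) :=
        (Measure.measurePreserving_sub_left volume L).setLIntegral_comp_preimage_emb
          (measurableEmbedding_subLeft L) (fun t => ENNReal.ofReal (1 / distBoundary D (γ t))) _

lemma qhDist_comm (x y : EuclideanSpace ℝ (Fin n)) : qhDist D x y = qhDist D y x :=
  (qhDist_le_qhDist_swap x y).antisymm (qhDist_le_qhDist_swap y x)

lemma distBoundary_le_add_of_lipschitzOnWith {a b : ℝ} {γ : ℝ → EuclideanSpace ℝ (Fin n)}
    (hγ : LipschitzOnWith 1 γ (Icc a b)) {u : ℝ} (hu : u ∈ Icc a b) :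
    distBoundary D (γ u) ≤ distBoundary D (γ a) + (u - a) := by
  have ha : a ∈ Icc a b := ⟨le_rfl, hu.1.trans hu.2⟩
  have hdist : dist (γ u) (γ a) ≤ u - a := by
    simpa [Real.dist_eq, abs_of_nonneg (sub_nonneg.2 hu.1)] using hγ.dist_le_mul u hu a ha
  calc distBoundary D (γ u) ≤ distBoundary D (γ a) + dist (γ u) (γ a) :=
        infDist_le_infDist_add_dist
    _ ≤ distBoundary D (γ a) + (u - a) := by linarith

variable (hδ : ∀ x ∈ D, 0 < distBoundary D x)
include hδ

lemma ofReal_log_one_add_le_lintegral {a b : ℝ} (hab : a ≤ b) {γ : ℝ → EuclideanSpace ℝ (Fin n)}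
    (hγ : LipschitzOnWith 1 γ (Icc a b)) (hD : γ '' Icc a b ⊆ D) :
    ENNReal.ofReal (log (1 + (b - a) / distBoundary D (γ a))) ≤
      ∫⁻ u in Icc a b, ENNReal.ofReal (1 / distBoundary D (γ u)) := by
  have hδγ : ∀ u ∈ Icc a b, 0 < distBoundary D (γ u) := fun u hu => hδ _ (hD ⟨u, hu, rfl⟩)
  rw [← lintegral_Icc_inv_add_sub (hδγ a ⟨le_rfl, hab⟩) hab]
  refine setLIntegral_mono' measurableSet_Icc fun u hu => ENNReal.ofReal_le_ofReal ?_
  rw [one_div]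
  exact inv_anti₀ (hδγ u hu) (distBoundary_le_add_of_lipschitzOnWith hγ hu)

lemma ofReal_log_div_le_qhDist (x y : EuclideanSpace ℝ (Fin n)) :
    ENNReal.ofReal (log (distBoundary D y / distBoundary D x)) ≤ qhDist D x y := by
  refine le_qhDist fun L γ hL hγ hx hy hD => ?_
  have hγD : ∀ t ∈ Icc 0 L, 0 < distBoundary D (γ t) := fun t ht => hδ _ (hD ⟨t, ht, rfl⟩)
  have hδx := hγD 0 ⟨le_rfl, hL⟩
  have hδy := hγD L ⟨hL, le_rfl⟩
  calc ENNReal.ofReal (log (distBoundary D y / distBoundary D x))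
      ≤ ENNReal.ofReal (log (1 + (L - 0) / distBoundary D (γ 0))) := by
        subst hx hy
        refine ENNReal.ofReal_le_ofReal (log_le_log (div_pos hδy hδx) ?_)
        rw [div_le_iff₀ hδx, add_mul, one_mul, div_mul_cancel₀ _ hδx.ne']
        exact distBoundary_le_add_of_lipschitzOnWith hγ ⟨hL, le_rfl⟩
    _ ≤ _ := ofReal_log_one_add_le_lintegral hδ hL hγ hD

lemma distBoundary_le_exp_mul_of_qhDist_le {x y : EuclideanSpace ℝ (Fin n)} (hx : x ∈ D)
    (hy : y ∈ D) {r : ℝ} (hr : 0 ≤ r) (h : qhDist D x y ≤ ENNReal.ofReal r) :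
    distBoundary D y ≤ exp r * distBoundary D x := by
  have hlog := (ofReal_log_div_le_qhDist hδ x y).trans h
  rwa [ENNReal.ofReal_le_ofReal_iff hr, log_le_iff_le_exp (div_pos (hδ y hy) (hδ x hx)),
    div_le_iff₀ (hδ x hx)] at hlog

end Quasihyperbolic

namespace IsWhitneyDecomposition

variable {n : ℕ} {D : Set (EuclideanSpace ℝ (Fin n))} {W : Set (DyadicCube n)}
  (hW : IsWhitneyDecomposition n D W)
include hW

lemma distBoundary_pos {x : EuclideanSpace ℝ (Fin n)} (hx : x ∈ D) : 0 < distBoundary D x := by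
  rw [hW.covers, mem_iUnion₂] at hx
  obtain ⟨Q, hQ, hxQ⟩ := hx
  exact Q.len_pos.trans_le (hW.comparable Q hQ x hxQ).1

lemma len_comparable_of_qhDist_le {Q : DyadicCube n} (hQ : Q ∈ W)
    {x y : EuclideanSpace ℝ (Fin n)} (hx : x ∈ D) (hy : y ∈ Q.set) {r : ℝ} (hr : 0 ≤ r)
    (h : qhDist D x y ≤ ENNReal.ofReal r) :
    distBoundary D x ≤ 6 * √n * exp r * Q.len ∧ Q.len ≤ exp r * distBoundary D x := by
  have hδ : ∀ z ∈ D, 0 < distBoundary D z := fun z hz => hW.distBoundary_pos hz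
  have hyD : y ∈ D := hW.subset Q hQ hy
  obtain ⟨hℓδ, hδℓ⟩ := hW.comparable Q hQ y hy
  constructor
  · calc distBoundary D x ≤ exp r * distBoundary D y :=
          distBoundary_le_exp_mul_of_qhDist_le hδ hyD hx hr (qhDist_comm (D := D) x y ▸ h)
      _ ≤ exp r * (6 * √n * Q.len) := by gcongr
      _ = 6 * √n * exp r * Q.len := by ring
  · exact hℓδ.trans (distBoundary_le_exp_mul_of_qhDist_le hδ hx hyD hr h)

end IsWhitneyDecomposition

namespace IsQHGeodesic

variable {n : ℕ} {D : Set (EuclideanSpace ℝ (Fin n))} {L : ℝ} {γ : ℝ → EuclideanSpace ℝ (Fin n)}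
  (hγ : IsQHGeodesic D L γ)
include hγ

lemma mem_of_mem_Icc {t : ℝ} (ht : t ∈ Icc 0 L) : γ t ∈ D := hγ.mem ⟨t, ht, rfl⟩

lemma qhDist_add {s t u : ℝ} (hs : 0 ≤ s) (hst : s ≤ t) (htu : t ≤ u) (hu : u ≤ L) :
    qhDist D (γ s) (γ u) = qhDist D (γ s) (γ t) + qhDist D (γ t) (γ u) := by
  have ht : 0 ≤ t := hs.trans hst
  rw [hγ.geodesic s ⟨hs, by linarith⟩ u ⟨by linarith, hu⟩ (hst.trans htu),
    hγ.geodesic s ⟨hs, by linarith⟩ t ⟨ht, by linarith⟩ hst,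
    hγ.geodesic t ⟨ht, by linarith⟩ u ⟨by linarith, hu⟩ htu, ← Icc_union_Ioc_eq_Icc hst htu,
    lintegral_union measurableSet_Ioc ((Iic_disjoint_Ioc le_rfl).mono_left Icc_subset_Iic_self),
    setLIntegral_congr Ioc_ae_eq_Icc]

lemma toReal_qhDist_eq_sub {s t : ℝ} (hs : 0 ≤ s) (hst : s ≤ t) (ht : t ≤ L)
    (hfin : qhDist D (γ 0) (γ t) ≠ ⊤) :
    (qhDist D (γ s) (γ t)).toReal =
      (qhDist D (γ 0) (γ t)).toReal - (qhDist D (γ 0) (γ s)).toReal := by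
  rw [hγ.qhDist_add le_rfl hs hst ht] at hfin ⊢
  rw [ENNReal.toReal_add (ENNReal.add_ne_top.1 hfin).1 (ENNReal.add_ne_top.1 hfin).2]
  ring

lemma qhDist_le_one_of_floor_eq (hfin : ∀ t ∈ Icc 0 L, qhDist D (γ 0) (γ t) ≠ ⊤) {s t : ℝ}
    (hs : s ∈ Icc 0 L) (ht : t ∈ Icc 0 L)
    (h : ⌊(qhDist D (γ 0) (γ s)).toReal⌋₊ = ⌊(qhDist D (γ 0) (γ t)).toReal⌋₊) :
    qhDist D (γ s) (γ t) ≤ 1 := by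
  wlog hst : s ≤ t generalizing s t
  · rw [qhDist_comm]
    exact this ht hs h.symm (le_of_not_ge hst)
  have hfin' : qhDist D (γ s) (γ t) ≠ ⊤ := by
    have := hfin t ht
    rw [hγ.qhDist_add le_rfl hs.1 hst ht.2] at this
    exact (ENNReal.add_ne_top.1 this).2
  rw [← ENNReal.ofReal_one, ENNReal.le_ofReal_iff_toReal_le hfin' zero_le_one,
    hγ.toReal_qhDist_eq_sub hs.1 hst ht.2 (hfin t ht)]
  have hlt := Nat.lt_floor_add_one (qhDist D (γ 0) (γ t)).toReal
  have hle := Nat.floor_le (ENNReal.toReal_nonneg (a := qhDist D (γ 0) (γ s)))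
  rw [← h] at hlt
  linarith

variable (hδ : ∀ x ∈ D, 0 < distBoundary D x)
include hδ

lemma sub_le_of_qhDist_le {s t : ℝ} (hs : 0 ≤ s) (hst : s ≤ t) (ht : t ≤ L) {r : ℝ} (hr : 0 ≤ r)
    (h : qhDist D (γ s) (γ t) ≤ ENNReal.ofReal r) :
    t - s ≤ (exp r - 1) * distBoundary D (γ s) := by
  have hsub : Icc s t ⊆ Icc 0 L := Icc_subset_Icc hs ht
  have hδs := hδ _ (hγ.mem_of_mem_Icc ⟨hs, hst.trans ht⟩)
  have hlog := (ofReal_log_one_add_le_lintegral hδ hst (hγ.lipschitz.mono hsub)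
    ((image_mono hsub).trans hγ.mem)).trans
    ((hγ.geodesic s ⟨hs, hst.trans ht⟩ t ⟨hs.trans hst, ht⟩ hst).symm.le.trans h)
  rw [ENNReal.ofReal_le_ofReal_iff hr, log_le_iff_le_exp (by positivity)] at hlog
  rw [← div_le_iff₀ hδs]
  linarith

lemma abs_sub_le_of_qhDist_le {s t : ℝ} (hs : s ∈ Icc 0 L) (ht : t ∈ Icc 0 L) {r : ℝ}
    (hr : 0 ≤ r) (h : qhDist D (γ s) (γ t) ≤ ENNReal.ofReal r) :
    |t - s| ≤ (exp r - 1) * exp r * distBoundary D (γ s) := by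
  have hδs := hδ _ (hγ.mem_of_mem_Icc hs)
  have he : 0 ≤ exp r - 1 := by linarith [one_le_exp hr]
  rcases le_total s t with hst | hts
  · rw [abs_of_nonneg (sub_nonneg.2 hst)]
    calc t - s ≤ (exp r - 1) * distBoundary D (γ s) := hγ.sub_le_of_qhDist_le hδ hs.1 hst ht.2 hr h
      _ ≤ (exp r - 1) * exp r * distBoundary D (γ s) := by
        rw [mul_assoc]; gcongr; exact le_mul_of_one_le_left hδs.le (one_le_exp hr)
  · rw [abs_of_nonpos (sub_nonpos.2 hts), neg_sub, mul_assoc]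
    calc s - t ≤ (exp r - 1) * distBoundary D (γ t) :=
          hγ.sub_le_of_qhDist_le hδ ht.1 hts hs.2 hr (qhDist_comm (D := D) _ _ ▸ h)
      _ ≤ (exp r - 1) * (exp r * distBoundary D (γ s)) := by
        gcongr
        exact distBoundary_le_exp_mul_of_qhDist_le hδ (hγ.mem_of_mem_Icc hs)
          (hγ.mem_of_mem_Icc ht) hr h

lemma subset_closedBall_of_qhDist_le {W : Set (DyadicCube n)}
    (hW : IsWhitneyDecomposition n D W) {Q : DyadicCube n} (hQ : Q ∈ W) {s t : ℝ}
    (hs : s ∈ Icc 0 L) (ht : t ∈ Icc 0 L) (htQ : γ t ∈ Q.set) {r : ℝ} (hr : 0 ≤ r) (h : qhDist D (γ s) (γ t) ≤ ENNReal.ofReal r) :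
    Q.set ⊆ closedBall (γ s) ((√n + exp r) * exp r * distBoundary D (γ s)) := by
  intro x hx
  have hcube := Q.dist_le_of_mem hx htQ
  have hlen := mul_le_mul_of_nonneg_left
    (hW.len_comparable_of_qhDist_le hQ (hγ.mem_of_mem_Icc hs) htQ hr h).2 (sqrt_nonneg n)
  have hdist : dist (γ t) (γ s) ≤ |t - s| := by
    simpa [Real.dist_eq] using hγ.lipschitz.dist_le_mul _ ht _ hs
  have htime := hγ.abs_sub_le_of_qhDist_le hδ hs ht hr h
  rw [mem_closedBall]
  nlinarith [dist_triangle x (γ t) (γ s), exp_pos r, hδ _ (hγ.mem_of_mem_Icc hs)]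

end IsQHGeodesic

/-- The constant of the estimate for the cubes met by a geodesic while its quasihyperbolic
distance to the basepoint lies in a fixed interval `[k, k + 1)`. -/
noncomputable def bandConst (n : ℕ) (β : ℝ) : ℝ :=
  max (exp 1 ^ (β - n)) ((6 * √n * exp 1) ^ (n - β)) * ((√n + exp 1) * exp 1) ^ n *
    (volume (ball (0 : EuclideanSpace ℝ (Fin n)) 1)).toReal

lemma bandConst_nonneg (n : ℕ) (β : ℝ) : 0 ≤ bandConst n β := by
  unfold bandConst; positivity

namespace IsHolderDomain

variable {n : ℕ} {D : Set (EuclideanSpace ℝ (Fin n))} {α c : ℝ} {x₀ : EuclideanSpace ℝ (Fin n)}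
  (hD : IsHolderDomain D α c x₀)
include hD

lemma qhDist_ne_top {x : EuclideanSpace ℝ (Fin n)} (hx : x ∈ D) : qhDist D x₀ x ≠ ⊤ :=
  ne_top_of_le_ne_top ENNReal.ofReal_ne_top (qhDist_comm (D := D) x₀ x ▸ hD.qh_bound x hx)

lemma distBoundary_le_mul_exp (hδ : ∀ x ∈ D, 0 < distBoundary D x)
    {x : EuclideanSpace ℝ (Fin n)} (hx : x ∈ D) :
    distBoundary D x ≤
      distBoundary D x₀ * exp (α * c) * exp (-(α * (qhDist D x₀ x).toReal)) := by
  have hk := qhDist_comm (D := D) x₀ x ▸ hD.qh_bound x hx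
  have hlow := ofReal_log_div_le_qhDist hδ x₀ x
  rw [← inv_div, log_inv] at hlow
  set k := qhDist D x₀ x
  set v := log (distBoundary D x₀ / distBoundary D x)
  have hδx := hδ x hx
  have hδ₀ := hδ x₀ hD.basepoint_mem
  have hα := hD.alpha_pos
  -- a negative bound would force `k = 0`, hence `v ≥ 0`, and then the bound is positive after all
  have hB : 0 ≤ 1 / α * v + c := by
    by_contra! hneg
    have hv0 : 0 ≤ v := by
      have := hlow.trans (hk.trans (ENNReal.ofReal_of_nonpos hneg.le).le)
      linarith [ENNReal.ofReal_eq_zero.1 (le_zero_iff.1 this)]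
    linarith [hD.c_pos, mul_nonneg (one_div_nonneg.2 hα.le) hv0]
  have hkv : α * k.toReal ≤ v + α * c := by
    have := mul_le_mul_of_nonneg_left (ENNReal.toReal_le_of_le_ofReal hB hk) hα.le
    rwa [mul_add, ← mul_assoc, mul_one_div_cancel hα.ne', one_mul] at this
  have hratio : distBoundary D x / distBoundary D x₀ ≤ exp (α * c - α * k.toReal) := by
    rw [← log_le_iff_le_exp (div_pos hδx hδ₀), ← inv_div, log_inv]
    linarith
  rw [div_le_iff₀ hδ₀] at hratio
  calc distBoundary D x ≤ exp (α * c - α * k.toReal) * distBoundary D x₀ := hratio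
    _ = _ := by rw [sub_eq_add_neg, exp_add]; ring

section Geodesic

variable {W : Set (DyadicCube n)} {L : ℝ} {γ : ℝ → EuclideanSpace ℝ (Fin n)}
  (hW : IsWhitneyDecomposition n D W) (hγ : IsQHGeodesic D L γ) (hγ0 : γ 0 = x₀)
include hW hγ hγ0

lemma tsum_len_rpow_band_le {ι : Type*} [Countable ι] {Q : ι → DyadicCube n} (hQW : ∀ i, Q i ∈ W)
    (hQ : Injective Q) {τ : ι → ℝ} (hτ : ∀ i, τ i ∈ Icc 0 L) (hτQ : ∀ i, γ (τ i) ∈ (Q i).set)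
    {k : ℕ} (hk : ∀ i, ⌊(qhDist D x₀ (γ (τ i))).toReal⌋₊ = k) {β : ℝ} (hβ : 0 ≤ β) :
    ∑' i, ENNReal.ofReal ((Q i).len ^ β) ≤ ENNReal.ofReal
      (bandConst n β * (distBoundary D x₀ * exp (α * c)) ^ β * exp (-(α * β)) ^ k) := by
  rcases isEmpty_or_nonempty ι with hι | ⟨⟨i₀⟩⟩
  · simp
  have hδ : ∀ x ∈ D, 0 < distBoundary D x := fun x hx => hW.distBoundary_pos hx
  have hfin : ∀ t ∈ Icc 0 L, qhDist D (γ 0) (γ t) ≠ ⊤ := fun t ht =>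
    hγ0 ▸ hD.qhDist_ne_top (hγ.mem_of_mem_Icc ht)
  set t₀ := τ i₀
  set d₀ := distBoundary D (γ t₀)
  have hmem : ∀ i, γ (τ i) ∈ D := fun i => hγ.mem_of_mem_Icc (hτ i)
  have hd₀ : 0 < d₀ := hδ _ (hmem i₀)
  have hclose : ∀ i, qhDist D (γ t₀) (γ (τ i)) ≤ ENNReal.ofReal 1 := fun i => by
    rw [ENNReal.ofReal_one]
    exact hγ.qhDist_le_one_of_floor_eq hfin (hτ i₀) (hτ i) (by rw [hγ0, hk, hk])
  have hlen : ∀ i, d₀ ≤ 6 * √n * exp 1 * (Q i).len ∧ (Q i).len ≤ exp 1 * d₀ := fun i =>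
    hW.len_comparable_of_qhDist_le (hQW i) (hmem i₀) (hτQ i) zero_le_one (hclose i)
  have hsub : ∀ i, (Q i).set ⊆ closedBall (γ t₀) ((√n + exp 1) * exp 1 * d₀) := fun i =>
    hγ.subset_closedBall_of_qhDist_le hδ hW (hQW i) (hτ i₀) (hτ i) (hτQ i) zero_le_one (hclose i)
  have hdisj : Pairwise (Disjoint on fun i => interior (Q i).set) := fun i j hij =>
    disjoint_iff_inter_eq_empty.2 (hW.disjoint_interiors _ (hQW i) _ (hQW j) (hQ.ne hij))
  have hdecay : d₀ ^ β ≤ (distBoundary D x₀ * exp (α * c)) ^ β * exp (-(α * β)) ^ k := by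
    have hkF : (k : ℝ) ≤ (qhDist D x₀ (γ t₀)).toReal := hk i₀ ▸ Nat.floor_le ENNReal.toReal_nonneg
    have hd₀le : d₀ ≤ distBoundary D x₀ * exp (α * c) * exp (-(α * k)) :=
      (hD.distBoundary_le_mul_exp hδ (hmem i₀)).trans <|
        mul_le_mul_of_nonneg_left (exp_le_exp.2 (neg_le_neg (by gcongr; exact hD.alpha_pos.le)))
          (mul_pos (hδ _ hD.basepoint_mem) (exp_pos _)).le
    calc d₀ ^ β ≤ (distBoundary D x₀ * exp (α * c) * exp (-(α * k))) ^ β := by gcongr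
      _ = _ := by
        rw [mul_rpow (by positivity [hδ _ hD.basepoint_mem]) (exp_pos _).le, ← exp_mul,
          ← exp_nat_mul]
        ring_nf
  calc ∑' i, ENNReal.ofReal ((Q i).len ^ β) ≤ ENNReal.ofReal (bandConst n β * d₀ ^ β) :=
        DyadicCube.tsum_ofReal_len_rpow_le hdisj (by positivity) hd₀ hlen hsub β
    _ ≤ _ := by
        rw [mul_assoc]
        exact ENNReal.ofReal_le_ofReal (mul_le_mul_of_nonneg_left hdecay (bandConst_nonneg n β))

theorem tsum_len_rpow_le {β : ℝ} (hβ : 0 < β) :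
    ∑' Q : {Q : DyadicCube n // Q ∈ W ∧ (Q.set ∩ γ '' Icc 0 L).Nonempty},
        ENNReal.ofReal ((Q : DyadicCube n).len ^ β) ≤
      ENNReal.ofReal (bandConst n β * exp (α * c * β) / (1 - exp (-(α * β))) *
        distBoundary D x₀ ^ β) := by
  have hmeet (Q : {Q : DyadicCube n // Q ∈ W ∧ (Q.set ∩ γ '' Icc 0 L).Nonempty}) :
      ∃ t ∈ Icc 0 L, γ t ∈ Q.1.set := by
    obtain ⟨_, _, _, hxQ, t, ht, rfl⟩ := Q
    exact ⟨t, ht, hxQ⟩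
  choose τ hτ hτQ using hmeet
  have hr : exp (-(α * β)) < 1 := exp_lt_one_iff.2 (neg_lt_zero.2 (mul_pos hD.alpha_pos hβ))
  have hδ₀ : 0 ≤ distBoundary D x₀ := infDist_nonneg
  calc _ ≤ ENNReal.ofReal (bandConst n β * (distBoundary D x₀ * exp (α * c)) ^ β) *
        (1 - ENNReal.ofReal (exp (-(α * β))))⁻¹ :=
        ENNReal.tsum_le_mul_inv_one_sub_of_fiber_le _
          (fun Q => ⌊(qhDist D x₀ (γ (τ Q))).toReal⌋₊) _ _ fun k => by
          rw [← ENNReal.ofReal_pow (exp_pos _).le,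
            ← ENNReal.ofReal_mul (by positivity [bandConst_nonneg n β])]
          exact hD.tsum_len_rpow_band_le hW hγ hγ0 (fun Q => Q.1.2.1)
            (Subtype.val_injective.comp Subtype.val_injective) (fun Q => hτ Q.1)
            (fun Q => hτQ Q.1) (fun Q => Q.2) hβ.le
    _ = _ := by
        rw [← ENNReal.ofReal_one, ← ENNReal.ofReal_sub _ (exp_pos _).le,
          ← ENNReal.ofReal_inv_of_pos (sub_pos.2 hr),
          ← ENNReal.ofReal_mul (by positivity [bandConst_nonneg n β]), mul_rpow hδ₀ (exp_pos _).le,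
          ← exp_mul]
        ring_nf

end Geodesic

end IsHolderDomain

theorem statement7 (n : ℕ) (α c β : ℝ) (hβ : 0 < β) :
    ∃ C : ℝ, 0 < C ∧
      ∀ (D : Set (EuclideanSpace ℝ (Fin n))) (x₀ : EuclideanSpace ℝ (Fin n))
        (W : Set (DyadicCube n)) (L : ℝ) (γ : ℝ → EuclideanSpace ℝ (Fin n)),
        IsHolderDomain D α c x₀ → IsWhitneyDecomposition n D W →
        IsQHGeodesic D L γ → γ 0 = x₀ →
        ∑' Q : {Q : DyadicCube n // Q ∈ W ∧ (Q.set ∩ γ '' Icc 0 L).Nonempty},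
            ENNReal.ofReal ((Q : DyadicCube n).len ^ β) ≤
          ENNReal.ofReal (C * distBoundary D x₀ ^ β) := by
  refine ⟨max 1 (bandConst n β * exp (α * c * β) / (1 - exp (-(α * β)))),
    lt_max_of_lt_left one_pos, fun D x₀ W L γ hD hW hγ hγ0 => ?_⟩
  refine (hD.tsum_len_rpow_le hW hγ hγ0 hβ).trans (ENNReal.ofReal_le_ofReal ?_)
  exact mul_le_mul_of_nonneg_right (le_max_right _ _) (rpow_nonneg infDist_nonneg _)
end

section
/- Let D ⊆ ℝⁿ be an (α,c)-Hölder domain with basepoint x₀. Then every point x ∈ ∂D is the landing point of a quasihyperbolic geodesic through x₀: there exists a rectifiable path γ : [0,1] → ℝⁿ with γ(0) = x, γ(1) = x₀, γ((0,1]) ⊆ D, such that the restriction of γ to (0,1] is a quasihyperbolic geodesic in D. -/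
open MeasureTheory Metric Set Filter
open scoped ENNReal NNReal Topology

/-- A quasihyperbolic geodesic landing at the boundary point `x` and ending at `x₀`:
a rectifiable (`1`-Lipschitz, parametrized by arclength) path `γ : [0, L] → ℝⁿ` with
`γ 0 = x`, `γ L = x₀`, whose restriction to `(0, L]` lies in `D` and is a quasihyperbolic
geodesic of `D`. -/
def IsLandingQHGeodesic {n : ℕ} (D : Set (EuclideanSpace ℝ (Fin n)))
    (x₀ x : EuclideanSpace ℝ (Fin n)) (L : ℝ) (γ : ℝ → EuclideanSpace ℝ (Fin n)) : Prop :=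
  0 < L ∧ γ 0 = x ∧ γ L = x₀ ∧ LipschitzOnWith 1 γ (Icc 0 L) ∧ γ '' Ioc 0 L ⊆ D ∧
    ∀ s ∈ Ioc 0 L, ∀ t ∈ Ioc 0 L, s ≤ t →
      qhDist D (γ s) (γ t) = ∫⁻ u in Icc s t, ENNReal.ofReal (1 / distBoundary D (γ u))

/-!
Choose points `z j ∈ D` tending to `x` and arclength parametrized curves `σ j` from `z j` to `x₀`
whose quasihyperbolic length exceeds `k_D(z j, x₀)` by at most `1 / (j + 1)`. On such a curve,
near-minimality and the Hölder condition give `δ_D(σ u) ≤ K e^{-α R(u)}` with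
`K = δ_D(x₀) e^{α (c + 1)}`, where `R(u)` is the quasihyperbolic length still to be travelled.
Since `R' = -1 / δ_D(σ u)`, this integrates to `α u ≤ K e^{-α R(u)}`; together with
`log (δ_D(x₀) / δ_D(σ u)) ≤ R(u)` it shows that the curves have bounded length and that
`δ_D(σ u) ≥ δ_D(x₀) (α u / K)^{1/α}`. Aligned at their common endpoint `x₀`, the `1`-Lipschitz
curves converge along an ultrafilter, uniformly on compact sets, to a `1`-Lipschitz curve from `x`
to `x₀`. Away from `x` they stay a definite distance from `∂D`, so quasihyperbolic lengths pass to
the limit and near-minimality becomes minimality.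
-/

section

variable {a b : ℝ}

lemma LipschitzWith.dist_le_sub {X : Type*} [PseudoMetricSpace X] {f : ℝ → X}
    (hf : LipschitzWith 1 f) {u v : ℝ} (huv : u ≤ v) : dist (f u) (f v) ≤ v - u := by
  simpa [Real.dist_eq, abs_of_nonpos (sub_nonpos.2 huv)] using hf.dist_le_mul u v

lemma lipschitzWith_ite_le {X : Type*} [PseudoMetricSpace X] {f g : ℝ → X} {L : ℝ}
    (hf : LipschitzWith 1 f) (hg : LipschitzWith 1 g) (hL : f L = g L) :
    LipschitzWith 1 (fun u => if u ≤ L then f u else g u) := by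
  refine LipschitzWith.of_dist_le_mul fun u v => ?_
  wlog huv : u ≤ v generalizing u v
  · rw [dist_comm, dist_comm u]
    exact this v u (le_of_not_ge huv)
  rw [NNReal.coe_one, one_mul, Real.dist_eq, abs_of_nonpos (sub_nonpos.2 huv), neg_sub]
  split_ifs with hu hv hv
  · exact hf.dist_le_sub huv
  · calc dist (f u) (g v) ≤ dist (f u) (f L) + dist (g L) (g v) := hL ▸ dist_triangle _ _ _
      _ ≤ (L - u) + (v - L) := add_le_add (hf.dist_le_sub hu) (hg.dist_le_sub (le_of_not_ge hv))
      _ = v - u := by ring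
  · exact absurd (huv.trans hv) hu
  · exact hg.dist_le_sub huv

lemma lintegral_Icc_ofReal {f : ℝ → ℝ} (hab : a ≤ b) (hf : ContinuousOn f (Icc a b))
    (hf₀ : ∀ u ∈ Icc a b, 0 ≤ f u) :
    ∫⁻ u in Icc a b, ENNReal.ofReal (f u) = ENNReal.ofReal (∫ u in a..b, f u) := by
  rw [intervalIntegral.integral_of_le hab, ← integral_Icc_eq_integral_Ioc,
    ofReal_integral_eq_lintegral_ofReal hf.integrableOn_Icc
      ((ae_restrict_iff' measurableSet_Icc).2 (.of_forall hf₀))]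

lemma log_div_le_integral_inv {f : ℝ → ℝ} (hab : a ≤ b) (hf : LipschitzOnWith 1 f (Icc a b))
    (hf₀ : ∀ u ∈ Icc a b, 0 < f u) : Real.log (f b / f a) ≤ ∫ u in a..b, (f u)⁻¹ := by
  have ha : a ∈ Icc a b := ⟨le_rfl, hab⟩
  have hle : ∀ u ∈ Icc a b, f u ≤ u + (f a - a) := fun u hu => by
    have := hf.dist_le_mul u hu a ha
    rw [NNReal.coe_one, one_mul, Real.dist_eq, Real.dist_eq, abs_of_nonneg (sub_nonneg.2 hu.1)]
      at this
    linarith [le_abs_self (f u - f a)]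
  have hfa := hf₀ a ha
  calc Real.log (f b / f a) ≤ Real.log ((b + (f a - a)) / f a) :=
        Real.log_le_log (div_pos (hf₀ b ⟨hab, le_rfl⟩) hfa)
          (div_le_div_of_nonneg_right (hle b ⟨hab, le_rfl⟩) hfa.le)
    _ = ∫ u in a..b, (u + (f a - a))⁻¹ := by
        rw [intervalIntegral.integral_comp_add_right (fun x => x⁻¹),
          integral_inv_of_pos (by linarith) (by linarith)]
        ring_nf
    _ ≤ ∫ u in a..b, (f u)⁻¹ := by
        refine intervalIntegral.integral_mono_on hab ?_ ?_ fun u hu =>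
          inv_anti₀ (hf₀ u hu) (hle u hu)
        · exact ((continuousOn_id.add continuousOn_const).inv₀ fun u hu =>
            (by linarith [hu.1] : 0 < u + (f a - a)).ne').intervalIntegrable_of_Icc hab
        · exact (hf.continuousOn.inv₀ fun u hu => (hf₀ u hu).ne').intervalIntegrable_of_Icc hab

lemma abs_log_div_le_integral_inv {f : ℝ → ℝ} (hab : a ≤ b) (hf : LipschitzOnWith 1 f (Icc a b))
    (hf₀ : ∀ u ∈ Icc a b, 0 < f u) : |Real.log (f b / f a)| ≤ ∫ u in a..b, (f u)⁻¹ := by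
  have hmaps : MapsTo (a + b - ·) (Icc a b) (Icc a b) := fun u hu =>
    ⟨by linarith [hu.2], by linarith [hu.1]⟩
  have hrev := log_div_le_integral_inv (f := fun u => f (a + b - u)) hab
    (by simpa [Function.comp_def] using
      hf.comp (IsometryEquiv.subLeft (a + b)).isometry.lipschitz.lipschitzOnWith hmaps)
    fun u hu => hf₀ _ (hmaps hu)
  rw [intervalIntegral.integral_comp_sub_left (fun u => (f u)⁻¹)] at hrev
  simp only [add_sub_cancel_left, add_sub_cancel_right] at hrev
  refine abs_le.2 ⟨?_, log_div_le_integral_inv hab hf hf₀⟩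
  rwa [neg_le, ← Real.log_inv, inv_div]

lemma mul_sub_le_mul_exp_neg_integral {h : ℝ → ℝ} {α K s : ℝ} (hh : Continuous h)
    (hpos : ∀ u, 0 < h u) (hα : 0 ≤ α) (has : a ≤ s)
    (hbound : ∀ u ∈ Icc a s, h u ≤ K * Real.exp (-α * ∫ v in u..b, (h v)⁻¹)) :
    α * (s - a) ≤ K * Real.exp (-α * ∫ v in s..b, (h v)⁻¹) := by
  set R := fun u => ∫ v in u..b, (h v)⁻¹
  have hinv : Continuous fun v => (h v)⁻¹ := hh.inv₀ fun v => (hpos v).ne'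
  have hR : ∀ u, HasDerivAt R (-(h u)⁻¹) u := fun u =>
    intervalIntegral.integral_hasDerivAt_left (hinv.intervalIntegrable _ _)
      (hinv.stronglyMeasurableAtFilter _ _) hinv.continuousAt
  set φ := fun u => K * Real.exp (-α * R u) - α * u
  have hφ : ∀ u, HasDerivAt φ (α * (K * Real.exp (-α * R u) / h u - 1)) u := fun u =>
    ((((hR u).const_mul (-α)).exp.const_mul K).sub ((hasDerivAt_id u).const_mul α)).congr_deriv
      (by field_simp)
  have hmono : MonotoneOn φ (Icc a s) := by
    refine monotoneOn_of_hasDerivWithinAt_nonneg (convex_Icc a s)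
      (HasDerivAt.continuousOn fun u _ => hφ u) (fun u _ => (hφ u).hasDerivWithinAt)
      fun u hu => mul_nonneg hα (sub_nonneg.2 ?_)
    rw [interior_Icc] at hu
    exact (one_le_div (hpos u)).2 (hbound u (Ioo_subset_Icc_self hu))
  have hφas := hmono ⟨le_rfl, has⟩ ⟨has, le_rfl⟩ has
  have ha := hbound a ⟨le_rfl, has⟩
  simp only [φ] at hφas
  linarith [hpos a]

lemma exists_log_div_sub_lt {m C e : ℝ} (hm : 0 < m) (he : 0 < e) :
    ∃ r, 0 < r ∧ r < m ∧ Real.log (m / (m - r)) < e ∧ C * r < e := by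
  have hlog : ∀ᶠ r in 𝓝 0, Real.log (m / (m - r)) < e :=
    ContinuousAt.eventually_lt (by fun_prop (disch := simp [hm.ne'])) continuousAt_const
      (by simpa [hm.ne'] using he)
  have hlin : ∀ᶠ r in 𝓝 0, C * r < e :=
    ContinuousAt.eventually_lt (by fun_prop) continuousAt_const (by simpa using he)
  obtain ⟨r, ⟨⟨hr_log, hr_lin⟩, hrm⟩, hr⟩ :=
    (((hlog.and hlin).and (eventually_lt_nhds hm)).filter_mono nhdsWithin_le_nhds |>.and
      (self_mem_nhdsWithin : ∀ᶠ r in 𝓝[>] (0 : ℝ), 0 < r)).exists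
  exact ⟨r, hr, hrm, hr_log, hr_lin⟩

lemma exists_lipschitzWith_tendsto {ι X Y : Type*} [PseudoMetricSpace X] [MetricSpace Y]
    [ProperSpace Y] (U : Ultrafilter ι) {f : ι → X → Y} {K : ℝ≥0}
    (hf : ∀ i, LipschitzWith K (f i)) {x₀ : X} {y₀ : Y} (h₀ : ∀ i, f i x₀ = y₀) :
    ∃ g : X → Y, LipschitzWith K g ∧ ∀ x, Tendsto (fun i => f i x) U (𝓝 (g x)) := by
  have hlim : ∀ x, ∃ y, Tendsto (fun i => f i x) U (𝓝 y) := fun x => by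
    obtain ⟨y, -, hy⟩ := (isCompact_closedBall y₀ (K * dist x x₀)).ultrafilter_le_nhds
      (U.map fun i => f i x) <| le_principal_iff.2 <| Ultrafilter.mem_map.2 <|
        Filter.univ_mem' fun i => by simpa [← h₀ i] using (hf i).dist_le_mul x x₀
    exact ⟨y, hy⟩
  choose g hg using hlim
  refine ⟨g, LipschitzWith.of_dist_le_mul fun x x' => ?_, hg⟩
  exact le_of_tendsto' ((hg x).dist (hg x')) fun i => (hf i).dist_le_mul x x'

lemma eventually_forall_dist_lt_of_tendsto {ι X : Type*} [PseudoMetricSpace X] {l : Filter ι}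
    {f : ι → ℝ → X} {g : ℝ → X} (hf : ∀ i, LipschitzWith 1 (f i))
    (hg : ∀ u, Tendsto (fun i => f i u) l (𝓝 (g u))) {K : Set ℝ} (hK : IsCompact K) {r : ℝ}
    (hr : 0 < r) : ∀ᶠ i in l, ∀ u ∈ K, dist (g u) (f i u) < r := by
  have hequi := (LipschitzWith.uniformEquicontinuous f 1 hf).equicontinuous
  have hunif := (EquicontinuousOn.tendsto_uniformOnFun_iff_pi' (𝔖 := {K}) (by simpa using hK)
    (by simpa using hequi.equicontinuousOn K) l g).2 (tendsto_pi_nhds.2 fun u => hg u)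
  rw [UniformOnFun.tendsto_iff_tendstoUniformlyOn] at hunif
  exact Metric.tendstoUniformlyOn_iff.1 (hunif K rfl) r hr

end

namespace QuasihyperbolicMetric

variable {n : ℕ} {D : Set (EuclideanSpace ℝ (Fin n))} {p q : EuclideanSpace ℝ (Fin n)}
  {γ γ' σ : ℝ → EuclideanSpace ℝ (Fin n)} {ε a b c : ℝ}

lemma lipschitzWith_distBoundary : LipschitzWith 1 (distBoundary D) :=
  lipschitz_infDist_pt _

lemma distBoundary_pos (hD : IsOpen D) (hfr : (frontier D).Nonempty) (hp : p ∈ D) :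
    0 < distBoundary D p :=
  (isClosed_frontier.notMem_iff_infDist_pos hfr).1 fun h => (hD.frontier_eq ▸ h).2 hp

lemma ball_distBoundary_subset (hD : IsOpen D) (hfr : (frontier D).Nonempty) (hp : p ∈ D) :
    ball p (distBoundary D p) ⊆ D := by
  refine (convex_ball _ _).isPreconnected.subset_of_closure_inter_subset hD ?_ ?_
  · exact ⟨p, mem_ball_self (distBoundary_pos hD hfr hp), hp⟩
  · rintro y ⟨hyD, hy⟩
    by_contra hy'
    have : distBoundary D p ≤ dist p y :=
      infDist_le_dist_of_mem (by rw [hD.frontier_eq]; exact ⟨hyD, hy'⟩)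
    rw [mem_ball, dist_comm] at hy
    linarith

noncomputable def qhLength (D : Set (EuclideanSpace ℝ (Fin n)))
    (γ : ℝ → EuclideanSpace ℝ (Fin n)) (a b : ℝ) : ℝ≥0∞ :=
  ∫⁻ u in Icc a b, ENNReal.ofReal (1 / distBoundary D (γ u))

lemma qhLength_self : qhLength D γ a a = 0 := by
  simp [qhLength]

lemma qhLength_add (hab : a ≤ b) (hbc : b ≤ c) :
    qhLength D γ a b + qhLength D γ b c = qhLength D γ a c := by
  rw [qhLength, qhLength, qhLength, ← Icc_union_Ioc_eq_Icc hab hbc,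
    lintegral_union measurableSet_Ioc ((Iic_disjoint_Ioc le_rfl).mono_left Icc_subset_Iic_self),
    restrict_Ioc_eq_restrict_Icc]

lemma qhLength_congr (h : EqOn γ γ' (Icc a b)) : qhLength D γ a b = qhLength D γ' a b :=
  setLIntegral_congr_fun measurableSet_Icc fun u hu => by rw [h hu]

lemma qhLength_comp_add_right (c : ℝ) :
    qhLength D (fun u => γ (u + c)) a b = qhLength D γ (a + c) (b + c) := by
  rw [qhLength, qhLength, ← image_add_const_Icc]
  exact (measurePreserving_add_right volume c).setLIntegral_comp_emb
    (measurableEmbedding_addRight c) (fun u => ENNReal.ofReal (1 / distBoundary D (γ u))) _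

lemma qhLength_eq_ofReal_integral (hD : IsOpen D) (hfr : (frontier D).Nonempty) (hab : a ≤ b)
    (hγ : ContinuousOn γ (Icc a b)) (hγD : ∀ u ∈ Icc a b, γ u ∈ D) :
    qhLength D γ a b = ENNReal.ofReal (∫ u in a..b, 1 / distBoundary D (γ u)) :=
  lintegral_Icc_ofReal hab
    (continuousOn_const.div (lipschitzWith_distBoundary.continuous.comp_continuousOn hγ)
      fun u hu => (distBoundary_pos hD hfr (hγD u hu)).ne')
    fun u hu => (one_div_pos.2 (distBoundary_pos hD hfr (hγD u hu))).le

lemma qhDist_le_qhLength (hab : a ≤ b) (hγ : LipschitzOnWith 1 γ (Icc a b))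
    (hγD : ∀ u ∈ Icc a b, γ u ∈ D) : qhDist D (γ a) (γ b) ≤ qhLength D γ a b := by
  have hmaps : MapsTo (· + a) (Icc 0 (b - a)) (Icc a b) := fun u hu =>
    ⟨by linarith [hu.1], by linarith [hu.2]⟩
  have hshift := qhLength_comp_add_right (D := D) (γ := γ) (a := 0) (b := b - a) a
  rw [zero_add, sub_add_cancel] at hshift
  rw [← hshift]
  refine iInf_le_of_le (b - a) <| iInf_le_of_le (fun u => γ (u + a)) <|
    iInf_le_of_le (sub_nonneg.2 hab) <| iInf_le_of_le ?_ <| iInf_le_of_le (by simp) <|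
    iInf_le_of_le (by simp) <| iInf_le_of_le ?_ le_rfl
  · simpa [Function.comp_def] using
      hγ.comp (isometry_add_right a).lipschitz.lipschitzOnWith hmaps
  · rintro _ ⟨u, hu, rfl⟩
    exact hγD _ (hmaps hu)

lemma exists_lipschitzWith_qhLength_lt {Q : ℝ≥0∞} (h : qhDist D p q < Q) :
    ∃ L ≥ 0, ∃ γ : ℝ → EuclideanSpace ℝ (Fin n), LipschitzWith 1 γ ∧ (∀ u, γ u ∈ D) ∧
      γ 0 = p ∧ γ L = q ∧ qhLength D γ 0 L < Q := by
  simp only [qhDist, iInf_lt_iff] at h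
  obtain ⟨L, γ, hL, hγ, rfl, rfl, hγD, hlt⟩ := h
  refine ⟨L, hL, IccExtend hL ((Icc 0 L).domRestrict γ), ?_, fun u => hγD ⟨_, Subtype.mem _, rfl⟩,
    by simp, by simp, ?_⟩
  · simpa only [mul_one, IccExtend] using hγ.to_restrict.comp (LipschitzWith.projIcc hL)
  · rwa [qhLength_congr fun u hu => IccExtend_of_mem hL _ hu]

lemma qhDist_triangle (p q r : EuclideanSpace ℝ (Fin n)) :
    qhDist D p r ≤ qhDist D p q + qhDist D q r := by
  refine ENNReal.le_of_forall_pos_le_add fun ε hε hlt => ?_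
  have hε2 : (ε / 2 : ℝ≥0∞) ≠ 0 := by simpa using hε.ne'
  obtain ⟨L₁, hL₁, γ₁, hγ₁, hγ₁D, rfl, rfl, hlt₁⟩ := exists_lipschitzWith_qhLength_lt
    (ENNReal.lt_add_right (ENNReal.add_lt_top.1 hlt).1.ne hε2)
  obtain ⟨L₂, hL₂, γ₂, hγ₂, hγ₂D, hq, rfl, hlt₂⟩ := exists_lipschitzWith_qhLength_lt
    (ENNReal.lt_add_right (ENNReal.add_lt_top.1 hlt).2.ne hε2)
  set γ₂' := fun u => γ₂ (u + -L₁)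
  have hγ₂' : LipschitzWith 1 γ₂' := by
    simpa [Function.comp_def] using hγ₂.comp (isometry_add_right (-L₁)).lipschitz
  set γ := fun u => if u ≤ L₁ then γ₁ u else γ₂' u
  have hγ : LipschitzWith 1 γ := lipschitzWith_ite_le hγ₁ hγ₂' (by simp [γ₂', hq])
  have hγ₁γ : EqOn γ γ₁ (Icc 0 L₁) := fun u hu => if_pos hu.2
  have hγ₂γ : EqOn γ γ₂' (Ici L₁) := fun u hu => by
    by_cases h : u ≤ L₁
    · simp [γ, γ₂', le_antisymm h hu, hq]
    · exact if_neg h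
  calc qhDist D (γ₁ 0) (γ₂ L₂) = qhDist D (γ 0) (γ (L₁ + L₂)) := by
        rw [hγ₁γ ⟨le_rfl, hL₁⟩, hγ₂γ (le_add_of_nonneg_right hL₂ : L₁ ≤ L₁ + L₂)]
        simp [γ₂']
    _ ≤ qhLength D γ 0 (L₁ + L₂) :=
        qhDist_le_qhLength (by positivity) hγ.lipschitzOnWith fun u _ => by
          by_cases h : u ≤ L₁
          · simpa [γ, h] using hγ₁D u
          · simpa [γ, h] using hγ₂D (u + -L₁)
    _ = qhLength D γ₁ 0 L₁ + qhLength D γ₂ 0 L₂ := by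
        rw [← qhLength_add hL₁ (le_add_of_nonneg_right hL₂), qhLength_congr hγ₁γ,
          qhLength_congr (hγ₂γ.mono Icc_subset_Ici_self), qhLength_comp_add_right]
        simp
    _ ≤ (qhDist D (γ₁ 0) (γ₁ L₁) + ε / 2) + (qhDist D (γ₁ L₁) (γ₂ L₂) + ε / 2) :=
        add_le_add hlt₁.le hlt₂.le
    _ = _ := by rw [add_add_add_comm, ENNReal.add_halves]

lemma qhDist_le_log (hD : IsOpen D) (hfr : (frontier D).Nonempty) {m r : ℝ} (hp : p ∈ D)
    (hm : m ≤ distBoundary D p) (hr : r < m) (hpq : dist p q ≤ r) :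
    qhDist D p q ≤ ENNReal.ofReal (Real.log (m / (m - r))) := by
  obtain rfl | hne := eq_or_ne p q
  · calc qhDist D p p ≤ qhLength D (fun _ => p) 0 0 :=
          qhDist_le_qhLength (γ := fun _ => p) le_rfl
            ((LipschitzWith.const p).weaken zero_le_one).lipschitzOnWith fun _ _ => hp
      _ ≤ _ := qhLength_self.trans_le zero_le
  set d := dist p q
  have hd : 0 < d := dist_pos.2 hne
  set γ := fun u : ℝ => AffineMap.lineMap p q (u / d)
  have hdist : ∀ u v, dist (γ u) (γ v) = dist u v := fun u v => by
    simp only [γ, dist_lineMap_lineMap, Real.dist_eq]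
    rw [← sub_div, abs_div, abs_of_pos hd, div_mul_cancel₀ _ hd.ne']
  have hγp : ∀ u ∈ Icc 0 d, dist (γ u) p = u := fun u hu => by
    simpa [γ, abs_of_nonneg hu.1] using hdist u 0
  have hlow : ∀ u ∈ Icc 0 d, m - u ≤ distBoundary D (γ u) := fun u hu => by
    have := (lipschitzWith_distBoundary (D := D)).dist_le_mul (γ u) p
    rw [NNReal.coe_one, one_mul, hγp u hu, Real.dist_eq] at this
    linarith [neg_abs_le (distBoundary D (γ u) - distBoundary D p)]
  have hγD : ∀ u ∈ Icc 0 d, γ u ∈ D := fun u hu =>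
    ball_distBoundary_subset hD hfr hp <| by
      rw [mem_ball, hγp u hu]; linarith [hu.2]
  calc qhDist D p q = qhDist D (γ 0) (γ d) := by simp [γ, hd.ne']
    _ ≤ qhLength D γ 0 d :=
        qhDist_le_qhLength hd.le (LipschitzWith.of_dist_le_mul fun u v => by
          simp [hdist]).lipschitzOnWith hγD
    _ ≤ ∫⁻ u in Icc 0 d, ENNReal.ofReal ((m - u)⁻¹) := by
        refine setLIntegral_mono' measurableSet_Icc fun u hu => ENNReal.ofReal_le_ofReal ?_
        rw [one_div]
        exact inv_anti₀ (by linarith [hu.2]) (hlow u hu)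
    _ = ENNReal.ofReal (Real.log (m / (m - d))) := by
        rw [lintegral_Icc_ofReal hd.le, intervalIntegral.integral_comp_sub_left (fun x => x⁻¹),
          sub_zero, integral_inv_of_pos (by linarith) (by linarith)]
        · exact (continuousOn_const.sub continuousOn_id).inv₀ fun u hu =>
            (sub_pos.2 (hu.2.trans_lt (by linarith))).ne'
        · exact fun u hu => inv_nonneg.2 (by linarith [hu.2])
    _ ≤ _ := by
        refine ENNReal.ofReal_le_ofReal (Real.log_le_log (div_pos (by linarith) (by linarith)) ?_)
        exact div_le_div_of_nonneg_left (by linarith) (by linarith) (by linarith)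

lemma ofReal_abs_log_le_qhDist (hD : IsOpen D) (hfr : (frontier D).Nonempty) :
    ENNReal.ofReal |Real.log (distBoundary D q / distBoundary D p)| ≤ qhDist D p q := by
  simp only [qhDist, le_iInf_iff]
  rintro L γ hL hγ rfl rfl hγD
  have hγD' : ∀ u ∈ Icc 0 L, γ u ∈ D := fun u hu => hγD (mem_image_of_mem γ hu)
  change _ ≤ qhLength D γ 0 L
  rw [qhLength_eq_ofReal_integral hD hfr hL hγ.continuousOn hγD']
  refine ENNReal.ofReal_le_ofReal ?_
  simpa only [one_div] using abs_log_div_le_integral_inv hL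
    (by simpa [Function.comp_def] using lipschitzWith_distBoundary.comp_lipschitzOnWith hγ)
    fun u hu => distBoundary_pos hD hfr (hγD' u hu)

/-- Lipschitz and `D`-valued on all of `ℝ`, not only on `[a, b]`, so that such curves can be
shifted and compared pointwise. -/
structure IsNearGeodesic (D : Set (EuclideanSpace ℝ (Fin n))) (ε a b : ℝ)
    (σ : ℝ → EuclideanSpace ℝ (Fin n)) : Prop where
  le : a ≤ b
  lipschitzWith : LipschitzWith 1 σ
  mem : ∀ u, σ u ∈ D
  qhLength_le : qhLength D σ a b ≤ qhDist D (σ a) (σ b) + ENNReal.ofReal ε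

namespace IsNearGeodesic

lemma qhDist_le (hσ : IsNearGeodesic D ε a b σ) {s t : ℝ} (hst : s ≤ t) :
    qhDist D (σ s) (σ t) ≤ qhLength D σ s t :=
  qhDist_le_qhLength hst hσ.lipschitzWith.lipschitzOnWith fun u _ => hσ.mem u

lemma mono (hD : IsOpen D) (hfr : (frontier D).Nonempty) (hσ : IsNearGeodesic D ε a b σ)
    {a' b' : ℝ} (ha : a ≤ a') (hab : a' ≤ b') (hb : b' ≤ b) : IsNearGeodesic D ε a' b' σ where
  le := hab
  lipschitzWith := hσ.lipschitzWith
  mem := hσ.mem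
  qhLength_le := by
    have hfin : ∀ s t, s ≤ t → qhLength D σ s t ≠ ⊤ := fun s t hst => by
      rw [qhLength_eq_ofReal_integral hD hfr hst hσ.lipschitzWith.continuous.continuousOn
        fun u _ => hσ.mem u]
      exact ENNReal.ofReal_ne_top
    refine (ENNReal.add_le_add_iff_left (hfin a a' ha)).1 <|
      (ENNReal.add_le_add_iff_right (hfin b' b hb)).1 ?_
    calc qhLength D σ a a' + qhLength D σ a' b' + qhLength D σ b' b = qhLength D σ a b := by
          rw [qhLength_add ha hab, qhLength_add (ha.trans hab) hb]
      _ ≤ qhDist D (σ a) (σ b) + ENNReal.ofReal ε := hσ.qhLength_le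
      _ ≤ qhDist D (σ a) (σ a') + qhDist D (σ a') (σ b') + qhDist D (σ b') (σ b) +
            ENNReal.ofReal ε := by
          gcongr
          exact (qhDist_triangle _ (σ b') _).trans (add_le_add (qhDist_triangle _ _ _) le_rfl)
      _ ≤ qhLength D σ a a' + qhDist D (σ a') (σ b') + qhLength D σ b' b + ENNReal.ofReal ε := by
          gcongr
          · exact hσ.qhDist_le ha
          · exact hσ.qhDist_le hb
      _ = _ := by ring

lemma comp_add_right (hσ : IsNearGeodesic D ε a b σ) (c : ℝ) :
    IsNearGeodesic D ε (a - c) (b - c) (fun u => σ (u + c)) where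
  le := by linarith [hσ.le]
  lipschitzWith := by
    simpa [Function.comp_def] using hσ.lipschitzWith.comp (isometry_add_right c).lipschitz
  mem u := hσ.mem _
  qhLength_le := by simpa [qhLength_comp_add_right] using hσ.qhLength_le

end IsNearGeodesic

lemma exists_isNearGeodesic (hk : qhDist D p q ≠ ⊤) (hε : 0 < ε) :
    ∃ T, ∃ σ, IsNearGeodesic D ε 0 T σ ∧ σ 0 = p ∧ σ T = q := by
  obtain ⟨T, hT, σ, hσ, hσD, rfl, rfl, hlt⟩ :=
    exists_lipschitzWith_qhLength_lt (ENNReal.lt_add_right hk (ENNReal.ofReal_pos.2 hε).ne')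
  exact ⟨T, σ, ⟨hT, hσ, hσD, hlt.le⟩, rfl, rfl⟩

lemma qhLength_le_add_of_dist_le {γ₁ γ₂ : ℝ → EuclideanSpace ℝ (Fin n)} {m r : ℝ} (hm : 0 < m)
    (hr : 0 ≤ r) (h₁ : ∀ u ∈ Icc a b, m ≤ distBoundary D (γ₁ u))
    (h₂ : ∀ u ∈ Icc a b, m ≤ distBoundary D (γ₂ u))
    (h : ∀ u ∈ Icc a b, dist (γ₁ u) (γ₂ u) ≤ r) :
    qhLength D γ₁ a b ≤ qhLength D γ₂ a b + ENNReal.ofReal ((b - a) / m ^ 2 * r) := by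
  calc qhLength D γ₁ a b ≤ ∫⁻ u in Icc a b,
        (ENNReal.ofReal (1 / distBoundary D (γ₂ u)) + ENNReal.ofReal (r / m ^ 2)) := by
        refine setLIntegral_mono' measurableSet_Icc fun u hu => ?_
        refine (ENNReal.ofReal_le_ofReal ?_).trans ENNReal.ofReal_add_le
        set x := distBoundary D (γ₁ u)
        set y := distBoundary D (γ₂ u)
        have hx : m ≤ x := h₁ u hu
        have hy : m ≤ y := h₂ u hu
        have hyx : y - x ≤ r := by
          have := (lipschitzWith_distBoundary (D := D)).dist_le_mul (γ₁ u) (γ₂ u)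
          rw [NNReal.coe_one, one_mul, Real.dist_eq] at this
          linarith [neg_abs_le (x - y), h u hu]
        have hx₀ : 0 < x := hm.trans_le hx
        have hy₀ : 0 < y := hm.trans_le hy
        calc 1 / x = 1 / y + (y - x) / (x * y) := by field_simp; ring
          _ ≤ 1 / y + r / m ^ 2 :=
            add_le_add le_rfl (div_le_div₀ hr hyx (by positivity) (by nlinarith))
    _ = qhLength D γ₂ a b + ENNReal.ofReal ((b - a) / m ^ 2 * r) := by
        rw [lintegral_add_right _ measurable_const, setLIntegral_const, Real.volume_Icc,
          ← ENNReal.ofReal_mul (div_nonneg hr (sq_nonneg m)), div_mul_comm]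
        rfl

lemma mem_and_le_distBoundary_of_tendsto (hD : IsOpen D) (hfr : (frontier D).Nonempty)
    {ι : Type*} {l : Filter ι} [l.NeBot] {y : ι → EuclideanSpace ℝ (Fin n)} {m : ℝ}
    (hy : Tendsto y l (𝓝 p)) (hm : 0 < m) (hyD : ∀ᶠ i in l, y i ∈ D ∧ m ≤ distBoundary D (y i)) :
    p ∈ D ∧ m ≤ distBoundary D p := by
  obtain ⟨i, hi, hiD, him⟩ := ((Metric.tendsto_nhds.1 hy m hm).and hyD).exists
  refine ⟨ball_distBoundary_subset hD hfr hiD ?_, ?_⟩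
  · rw [mem_ball, dist_comm]
    exact hi.trans_le him
  · exact ge_of_tendsto ((lipschitzWith_distBoundary.continuous.tendsto p).comp hy)
      (hyD.mono fun i hi => hi.2)

lemma qhLength_le_qhDist_of_tendsto (hD : IsOpen D) (hfr : (frontier D).Nonempty)
    {ι : Type*} {l : Filter ι} [l.NeBot] {ψ : ι → ℝ → EuclideanSpace ℝ (Fin n)} {ε : ι → ℝ}
    {γ : ℝ → EuclideanSpace ℝ (Fin n)} {s t m : ℝ} (hm : 0 < m)
    (hlip : ∀ i, LipschitzWith 1 (ψ i))
    (hψ : ∀ᶠ i in l, IsNearGeodesic D (ε i) s t (ψ i) ∧ ∀ u ∈ Icc s t, m ≤ distBoundary D (ψ i u))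
    (hε : Tendsto ε l (𝓝 0)) (hγ : ∀ u, Tendsto (fun i => ψ i u) l (𝓝 (γ u))) :
    qhLength D γ s t ≤ qhDist D (γ s) (γ t) := by
  have hγD : ∀ u ∈ Icc s t, γ u ∈ D ∧ m ≤ distBoundary D (γ u) := fun u hu =>
    mem_and_le_distBoundary_of_tendsto hD hfr (hγ u) hm
      (hψ.mono fun i hi => ⟨hi.1.mem u, hi.2 u hu⟩)
  refine ENNReal.le_of_forall_pos_le_add fun e he _ => ?_
  have he4 : (0 : ℝ) < e / 4 := by positivity
  obtain ⟨r, hr, hrm, hr_log, hr_lin⟩ := exists_log_div_sub_lt (C := (t - s) / m ^ 2) hm he4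
  obtain ⟨i, ⟨hψi, hψm⟩, hεi, hdist⟩ := (hψ.and ((hε.eventually (gt_mem_nhds he4)).and
    (eventually_forall_dist_lt_of_tendsto hlip hγ isCompact_Icc hr))).exists
  -- Replace `γ` on `[s, t]` by the `r`-close near-geodesic `ψ i`, and join the endpoints of the
  -- two curves by segments.
  calc qhLength D γ s t
      ≤ qhLength D (ψ i) s t + ENNReal.ofReal ((t - s) / m ^ 2 * r) :=
        qhLength_le_add_of_dist_le hm hr.le (fun u hu => (hγD u hu).2) hψm
          fun u hu => (hdist u hu).le
    _ ≤ qhDist D (ψ i s) (γ s) + qhDist D (γ s) (γ t) + qhDist D (γ t) (ψ i t) +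
          ENNReal.ofReal (ε i) + ENNReal.ofReal ((t - s) / m ^ 2 * r) := by
        gcongr
        exact hψi.qhLength_le.trans (add_le_add ((qhDist_triangle _ (γ t) _).trans
          (add_le_add (qhDist_triangle _ _ _) le_rfl)) le_rfl)
    _ ≤ ENNReal.ofReal (e / 4) + qhDist D (γ s) (γ t) + ENNReal.ofReal (e / 4) +
          ENNReal.ofReal (e / 4) + ENNReal.ofReal (e / 4) := by
        gcongr
        · exact (qhDist_le_log hD hfr (hψi.mem s) (hψm s ⟨le_rfl, hψi.le⟩) hrm
            (dist_comm (ψ i s) (γ s) ▸ (hdist s ⟨le_rfl, hψi.le⟩).le)).trans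
            (ENNReal.ofReal_le_ofReal hr_log.le)
        · have ht : t ∈ Icc s t := ⟨hψi.le, le_rfl⟩
          exact (qhDist_le_log hD hfr (hγD t ht).1 (hγD t ht).2 hrm (hdist t ht).le).trans
            (ENNReal.ofReal_le_ofReal hr_log.le)
    _ = qhDist D (γ s) (γ t) + e := by
        have hquarters : ENNReal.ofReal (e / 4) + ENNReal.ofReal (e / 4) + ENNReal.ofReal (e / 4) +
            ENNReal.ofReal (e / 4) = e := by
          rw [← ENNReal.ofReal_add he4.le he4.le, ← ENNReal.ofReal_add (by positivity) he4.le,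
            ← ENNReal.ofReal_add (by positivity) he4.le, ← ENNReal.ofReal_coe_nnreal]
          ring_nf
        rw [← hquarters]
        ring

lemma isLandingQHGeodesic_of_tendsto (hD : IsOpen D) {x x₀ : EuclideanSpace ℝ (Fin n)}
    (hx : x ∈ frontier D) (hx₀ : x₀ ∈ D) {ι : Type*} {l : Filter ι} [l.NeBot]
    {ψ : ι → ℝ → EuclideanSpace ℝ (Fin n)} {ε a : ι → ℝ} {T : ℝ} {η : ℝ → ℝ}
    {γ : ℝ → EuclideanSpace ℝ (Fin n)}
    (hψ : ∀ i, IsNearGeodesic D (ε i) (a i) T (ψ i)) (hψT : ∀ i, ψ i T = x₀)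
    (hψa : Tendsto (fun i => ψ i (a i)) l (𝓝 x)) (ha : Tendsto a l (𝓝 0))
    (hε : Tendsto ε l (𝓝 0)) (hη : ∀ t > 0, 0 < η t) (hηmono : MonotoneOn η (Ioi 0))
    (hlow : ∀ i, ∀ s ∈ Ioc (a i) T, η (s - a i) ≤ distBoundary D (ψ i s))
    (hγ : LipschitzWith 1 γ) (hψγ : ∀ u, Tendsto (fun i => ψ i u) l (𝓝 (γ u))) :
    IsLandingQHGeodesic D x₀ x T γ := by
  have hfr : (frontier D).Nonempty := ⟨x, hx⟩
  have hγ0 : γ 0 = x := by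
    refine tendsto_nhds_unique (hψγ 0) (hψa.congr_dist (squeeze_zero (fun _ => dist_nonneg)
      (fun i => ?_) (tendsto_iff_dist_tendsto_zero.1 ha)))
    simpa using (hψ i).lipschitzWith.dist_le_mul (a i) 0
  have hγT : γ T = x₀ := tendsto_nhds_unique (hψγ T) (by simp [hψT])
  have hT : 0 < T := by
    have hxx₀ : 0 < dist x x₀ := dist_pos.2 fun h => (hD.frontier_eq ▸ hx).2 (h ▸ hx₀)
    have := hγ.dist_le_sub (le_of_tendsto ha (.of_forall fun i => (hψ i).le))
    rw [hγ0, hγT, sub_zero] at this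
    linarith
  have hnear : ∀ {s t}, 0 < s → s ≤ t → t ≤ T → ∀ᶠ i in l, IsNearGeodesic D (ε i) s t (ψ i) ∧
      ∀ u ∈ Icc s t, η (s / 2) ≤ distBoundary D (ψ i u) := fun hs hst htT =>
    (ha.eventually (gt_mem_nhds (half_pos hs))).mono fun i hi =>
      ⟨(hψ i).mono hD hfr (by linarith) hst htT, fun u hu =>
        (hηmono (half_pos hs) (by simp only [mem_Ioi]; linarith [hu.1]) (by linarith [hu.1])).trans
          (hlow i u ⟨by linarith [hu.1], hu.2.trans htT⟩)⟩
  have hγD : ∀ u ∈ Ioc 0 T, γ u ∈ D := fun u hu =>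
    (mem_and_le_distBoundary_of_tendsto hD hfr (hψγ u) (hη _ (half_pos hu.1))
      ((hnear hu.1 le_rfl hu.2).mono fun i hi => ⟨hi.1.mem u, hi.2 u ⟨le_rfl, le_rfl⟩⟩)).1
  refine ⟨hT, hγ0, hγT, hγ.lipschitzOnWith, ?_, fun s hs t ht hst => le_antisymm ?_ ?_⟩
  · rintro _ ⟨u, hu, rfl⟩
    exact hγD u hu
  · exact qhDist_le_qhLength hst hγ.lipschitzOnWith fun u hu =>
      hγD u ⟨hs.1.trans_le hu.1, hu.2.trans ht.2⟩
  · exact qhLength_le_qhDist_of_tendsto hD hfr (hη _ (half_pos hs.1))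
      (fun i => (hψ i).lipschitzWith) (hnear hs.1 hst ht.2) hε hψγ

end QuasihyperbolicMetric

namespace IsHolderDomain

open QuasihyperbolicMetric

variable {n : ℕ} {D : Set (EuclideanSpace ℝ (Fin n))} {p : EuclideanSpace ℝ (Fin n)}
  {σ : ℝ → EuclideanSpace ℝ (Fin n)} {ε a b α c : ℝ} {x₀ : EuclideanSpace ℝ (Fin n)}

lemma toReal_qhDist_le (H : IsHolderDomain D α c x₀) (hfr : (frontier D).Nonempty)
    (hp : p ∈ D) :
    (qhDist D p x₀).toReal ≤ 1 / α * Real.log (distBoundary D x₀ / distBoundary D p) + c := by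
  refine ENNReal.toReal_le_of_le_ofReal ?_ (H.qh_bound p hp)
  -- A negative bound would be read as `ofReal _ = 0`; then `k_D(p, x₀) = 0` forces
  -- `δ_D(p) = δ_D(x₀)`, and the bound is `c > 0`.
  by_contra! hneg
  have habs := (ofReal_abs_log_le_qhDist H.isOpen hfr).trans <|
    (H.qh_bound p hp).trans_eq (ENNReal.ofReal_of_nonpos hneg.le)
  rw [nonpos_iff_eq_zero, ENNReal.ofReal_eq_zero, abs_nonpos_iff] at habs
  rw [habs, mul_zero, zero_add] at hneg
  exact hneg.not_ge H.c_pos.le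

lemma distBoundary_le (H : IsHolderDomain D α c x₀) (hfr : (frontier D).Nonempty)
    (hσ : IsNearGeodesic D ε a b σ) (hb : σ b = x₀) (hε : ε ≤ 1) {u : ℝ} (hu : u ∈ Icc a b) :
    distBoundary D (σ u) ≤ distBoundary D x₀ * Real.exp (α * (c + 1)) *
      Real.exp (-α * ∫ v in u..b, (distBoundary D (σ v))⁻¹) := by
  set R := ∫ v in u..b, (distBoundary D (σ v))⁻¹
  have hσu : 0 < distBoundary D (σ u) := distBoundary_pos H.isOpen hfr (hσ.mem u)
  have hk : qhDist D (σ u) x₀ ≠ ⊤ :=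
    ne_top_of_le_ne_top ENNReal.ofReal_ne_top (H.qh_bound _ (hσ.mem u))
  have hlen := ((hσ.mono H.isOpen hfr hu.1 hu.2 le_rfl).qhLength_le).trans
    (add_le_add le_rfl (ENNReal.ofReal_le_ofReal hε))
  rw [hb, qhLength_eq_ofReal_integral H.isOpen hfr hu.2 hσ.lipschitzWith.continuous.continuousOn
    fun v _ => hσ.mem v, ENNReal.ofReal_one, ENNReal.ofReal_le_iff_le_toReal (by simpa using hk),
    ENNReal.toReal_add hk ENNReal.one_ne_top, ENNReal.toReal_one] at hlen
  simp only [one_div] at hlen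
  have hRle : R ≤ 1 / α * Real.log (distBoundary D x₀ / distBoundary D (σ u)) + c + 1 := by
    linarith [H.toReal_qhDist_le hfr (hσ.mem u)]
  have hR : α * R - α * (c + 1) ≤ Real.log (distBoundary D x₀ / distBoundary D (σ u)) := by
    have := mul_le_mul_of_nonneg_left hRle H.alpha_pos.le
    rw [mul_add, mul_add, ← mul_assoc, mul_one_div_cancel H.alpha_pos.ne', one_mul] at this
    linarith
  rw [Real.le_log_iff_exp_le (div_pos (distBoundary_pos H.isOpen hfr H.basepoint_mem) hσu),
    le_div_iff₀ hσu] at hR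
  calc distBoundary D (σ u)
      = Real.exp (-(α * R - α * (c + 1))) *
          (Real.exp (α * R - α * (c + 1)) * distBoundary D (σ u)) := by
        rw [← mul_assoc, ← Real.exp_add, neg_add_cancel, Real.exp_zero, one_mul]
    _ ≤ Real.exp (-(α * R - α * (c + 1))) * distBoundary D x₀ := by gcongr
    _ = _ := by
        rw [mul_comm, mul_assoc, ← Real.exp_add]
        ring_nf

lemma isNearGeodesic_bounds (H : IsHolderDomain D α c x₀) (hfr : (frontier D).Nonempty)
    (hσ : IsNearGeodesic D ε a b σ) (hb : σ b = x₀) (hε : ε ≤ 1) :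
    α * (b - a) ≤ distBoundary D x₀ * Real.exp (α * (c + 1)) ∧
      ∀ s ∈ Ioc a b, distBoundary D x₀ *
        (α * (s - a) / (distBoundary D x₀ * Real.exp (α * (c + 1)))) ^ α⁻¹ ≤
          distBoundary D (σ s) := by
  set δ₀ := distBoundary D x₀
  set K := δ₀ * Real.exp (α * (c + 1))
  have hδ₀ : 0 < δ₀ := distBoundary_pos H.isOpen hfr H.basepoint_mem
  have hα := H.alpha_pos
  have hσc : Continuous σ := hσ.lipschitzWith.continuous
  have hgron : ∀ s ∈ Icc a b,
      α * (s - a) ≤ K * Real.exp (-α * ∫ v in s..b, (distBoundary D (σ v))⁻¹) := fun s hs =>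
    mul_sub_le_mul_exp_neg_integral (lipschitzWith_distBoundary.continuous.comp hσc)
      (fun u => distBoundary_pos H.isOpen hfr (hσ.mem u)) hα.le hs.1
      fun u hu => H.distBoundary_le hfr hσ hb hε ⟨hu.1, hu.2.trans hs.2⟩
  refine ⟨by simpa using hgron b ⟨hσ.le, le_rfl⟩, fun s hs => ?_⟩
  have hδs : 0 < distBoundary D (σ s) := distBoundary_pos H.isOpen hfr (hσ.mem s)
  have hlog : Real.log (δ₀ / distBoundary D (σ s)) ≤
      ∫ v in s..b, (distBoundary D (σ v))⁻¹ := by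
    have hk := hσ.qhDist_le hs.2
    rw [hb, qhLength_eq_ofReal_integral H.isOpen hfr hs.2 hσc.continuousOn
      fun v _ => hσ.mem v] at hk
    have := (ofReal_abs_log_le_qhDist H.isOpen hfr).trans hk
    rw [ENNReal.ofReal_le_ofReal_iff (intervalIntegral.integral_nonneg hs.2 fun v _ =>
      (one_div_pos.2 (distBoundary_pos H.isOpen hfr (hσ.mem v))).le)] at this
    simpa only [one_div] using (le_abs_self _).trans this
  have hpow : α * (s - a) / K ≤ (distBoundary D (σ s) / δ₀) ^ α := by
    rw [div_le_iff₀' (by positivity), Real.rpow_def_of_pos (div_pos hδs hδ₀)]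
    refine (hgron s ⟨hs.1.le, hs.2⟩).trans
      (mul_le_mul_of_nonneg_left (Real.exp_le_exp.2 ?_) (by positivity))
    rw [← inv_div, Real.log_inv]
    nlinarith
  calc δ₀ * (α * (s - a) / K) ^ α⁻¹
      ≤ δ₀ * ((distBoundary D (σ s) / δ₀) ^ α) ^ α⁻¹ := by
        have : 0 ≤ α * (s - a) := mul_nonneg hα.le (sub_nonneg.2 hs.1.le)
        gcongr
    _ = distBoundary D (σ s) := by
        rw [Real.rpow_rpow_inv (div_pos hδs hδ₀).le hα.ne', mul_div_cancel₀ _ hδ₀.ne']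

lemma exists_bounds_isNearGeodesic (H : IsHolderDomain D α c x₀)
    (hfr : (frontier D).Nonempty) :
    ∃ Λ, ∃ η : ℝ → ℝ, (∀ t > 0, 0 < η t) ∧ MonotoneOn η (Ioi 0) ∧
      ∀ {ε a b : ℝ} {σ : ℝ → EuclideanSpace ℝ (Fin n)}, IsNearGeodesic D ε a b σ →
        σ b = x₀ → ε ≤ 1 → b - a ≤ Λ ∧ ∀ s ∈ Ioc a b, η (s - a) ≤ distBoundary D (σ s) := by
  have hδ₀ : 0 < distBoundary D x₀ := distBoundary_pos H.isOpen hfr H.basepoint_mem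
  have hα := H.alpha_pos
  set K := distBoundary D x₀ * Real.exp (α * (c + 1))
  have hK : 0 < K := by positivity
  refine ⟨K / α, fun t => distBoundary D x₀ * (α * t / K) ^ α⁻¹,
    fun t ht => mul_pos hδ₀ (Real.rpow_pos_of_pos (by positivity) _),
    fun t ht t' ht' htt' => ?_, fun hσ hb hε => ?_⟩
  · have : 0 ≤ α * t / K := by have := ht.out; positivity
    dsimp only
    gcongr
  · obtain ⟨hlen, hlow⟩ := H.isNearGeodesic_bounds hfr hσ hb hε
    exact ⟨(le_div_iff₀' hα).2 hlen, hlow⟩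

end IsHolderDomain

open QuasihyperbolicMetric in
theorem statement9 (n : ℕ) (α c : ℝ) (D : Set (EuclideanSpace ℝ (Fin n)))
    (x₀ : EuclideanSpace ℝ (Fin n)) (hD : IsHolderDomain D α c x₀) :
    ∀ x ∈ frontier D, ∃ (L : ℝ) (γ : ℝ → EuclideanSpace ℝ (Fin n)),
      IsLandingQHGeodesic D x₀ x L γ := by
  intro x hx
  obtain ⟨Λ, η, hη, hηmono, hbounds⟩ := hD.exists_bounds_isNearGeodesic ⟨x, hx⟩
  obtain ⟨z, hzD, hzx⟩ := mem_closure_iff_seq_limit.1 (frontier_subset_closure hx)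
  set ε : ℕ → ℝ := fun j => 1 / ((j : ℝ) + 1)
  have hε : ∀ j, 0 < ε j := fun j => by positivity
  have hε₁ : ∀ j, ε j ≤ 1 := fun j => div_le_one_of_le₀ (by simp) (by positivity)
  choose T₀ σ hσ hσ0 hσT using fun j => exists_isNearGeodesic (ε := ε j)
    (ne_top_of_le_ne_top ENNReal.ofReal_ne_top (hD.qh_bound _ (hzD j))) (hε j)
  set U : Ultrafilter ℕ := Ultrafilter.of atTop
  have hU : (U : Filter ℕ) ≤ atTop := Ultrafilter.of_le atTop
  obtain ⟨T, -, hT⟩ := isCompact_Icc.ultrafilter_le_nhds (U.map T₀) <| le_principal_iff.2 <|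
    Ultrafilter.mem_map.2 <| univ_mem' fun j =>
      ⟨(hσ j).le, by simpa using (hbounds (hσ j) (hσT j) (hε₁ j)).1⟩
  rw [Ultrafilter.coe_map] at hT
  set ψ := fun j u => σ j (u + (T₀ j - T))
  have hψ : ∀ j, IsNearGeodesic D (ε j) (T - T₀ j) T (ψ j) := fun j => by
    simpa using (hσ j).comp_add_right (T₀ j - T)
  have hψT : ∀ j, ψ j T = x₀ := fun j => by simp [ψ, hσT]
  obtain ⟨γ, hγ, hψγ⟩ := exists_lipschitzWith_tendsto U (fun j => (hψ j).lipschitzWith) hψT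
  refine ⟨T, γ, isLandingQHGeodesic_of_tendsto hD.isOpen hx hD.basepoint_mem hψ hψT ?_ ?_
    (tendsto_one_div_add_atTop_nhds_zero_nat.mono_left hU) hη hηmono
    (fun j => (hbounds (hψ j) (hψT j) (hε₁ j)).2) hγ hψγ⟩
  · simpa [ψ, hσ0] using hzx.mono_left hU
  · simpa using (tendsto_const_nhds (x := T)).sub hT
end

section
/- Let f : (0,1) → ℝ be continuous and let A ⊆ (0,1) be compact. Assume that f is absolutely continuous on every compact subinterval of every connected component of (0,1) ∖ A, that f is differentiable almost everywhere on (0,1) ∖ A with ∫_{(0,1)∖A} |f'| < ∞, and that the image f(A) has 1-dimensional Lebesgue measure zero. Then f is absolutely continuous on every compact subinterval of (0,1). -/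
/-! For `s < t` in `(0, 1)`, the open set `(s, t) \ A` is a countable disjoint union of intervals
on whose compact subintervals `f` is absolutely continuous; by the fundamental theorem of calculus
the oscillation of `f` on each of them is at most the integral of `|f'|` there. Hence
`|f t - f s| ≤ λ (f '' [s, t]) ≤ λ (f '' ({s, t} ∪ A)) + ∫_{(s, t) \ A} |f'|`, where the first
term vanishes; the absolute continuity of the integral of `|f'|` then gives that of `f`. -/

open MeasureTheory Metric Set Filter
open scoped ENNReal NNReal Topology

/-- `f` is absolutely continuous on the compact interval `[a, b]`: for every `ε > 0` there is
`δ > 0` such that for every finite collection of pairwise disjoint open subintervals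
`(s i, t i)` of `[a, b]` of total length less than `δ`, `∑ i, |f (t i) - f (s i)| < ε`. -/
def AbsolutelyContinuousOnIcc (f : ℝ → ℝ) (a b : ℝ) : Prop :=
  ∀ ε > (0 : ℝ), ∃ δ > (0 : ℝ), ∀ (m : ℕ) (s t : Fin m → ℝ),
    (∀ i, a ≤ s i ∧ s i < t i ∧ t i ≤ b) →
    (Pairwise fun i j => Disjoint (Ioo (s i) (t i)) (Ioo (s j) (t j))) →
    ∑ i, (t i - s i) < δ → ∑ i, |f (t i) - f (s i)| < ε

theorem AbsolutelyContinuousOnIcc.absolutelyContinuousOnInterval {f : ℝ → ℝ} {a b : ℝ}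
    (hab : a ≤ b) (hf : AbsolutelyContinuousOnIcc f a b) :
    AbsolutelyContinuousOnInterval f a b := by
  rw [absolutelyContinuousOnInterval_iff]
  intro ε hε
  obtain ⟨δ, hδ, hfδ⟩ := hf ε hε
  refine ⟨δ, hδ, ?_⟩
  rintro ⟨n, I⟩ ⟨hI, hdisj⟩ hlen
  dsimp only at hI hdisj hlen ⊢
  rw [uIcc_of_le hab] at hI
  -- degenerate intervals contribute nothing; the others are listed as `Fin m`-indexed `Ioo`s
  set P := (Finset.range n).filter fun i => (I i).1 ≠ (I i).2
  set e : Fin P.card ≃ P := P.equivFin.symm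
  have reindex : ∀ F : ℕ → ℝ, (∀ i, (I i).1 = (I i).2 → F i = 0) →
      ∑ i ∈ Finset.range n, F i = ∑ k, F (e k) := by
    intro F hF
    rw [← Finset.sum_filter_of_ne fun i _ hi => mt (hF i) hi, ← Finset.sum_coe_sort,
      e.sum_comp (fun i : P => F i)]
  have hmemP : ∀ k, (e k : ℕ) ∈ Finset.range n ∧ (I (e k)).1 ≠ (I (e k)).2 := fun k =>
    Finset.mem_filter.1 (e k).2
  set s : Fin P.card → ℝ := fun k => min (I (e k)).1 (I (e k)).2
  set t : Fin P.card → ℝ := fun k => max (I (e k)).1 (I (e k)).2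
  have hst : ∀ k, a ≤ s k ∧ s k < t k ∧ t k ≤ b := fun k =>
    ⟨le_min (hI _ (hmemP k).1).1.1 (hI _ (hmemP k).1).2.1, min_lt_max.2 (hmemP k).2,
      max_le (hI _ (hmemP k).1).1.2 (hI _ (hmemP k).1).2.2⟩
  have hdisj' : Pairwise fun k l => Disjoint (Ioo (s k) (t k)) (Ioo (s l) (t l)) :=
    fun k l hkl => (hdisj (hmemP k).1 (hmemP l).1 fun h => hkl (e.injective (Subtype.ext h))).mono
      Ioo_subset_Ioc_self Ioo_subset_Ioc_self
  have hlen' : ∑ k, (t k - s k) = ∑ i ∈ Finset.range n, dist (I i).1 (I i).2 := by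
    rw [reindex _ fun i hi => by simp [hi]]
    simp [s, t, Real.dist_eq, max_sub_min_eq_abs']
  have hsum :
      ∑ k, |f (t k) - f (s k)| = ∑ i ∈ Finset.range n, dist (f (I i).1) (f (I i).2) := by
    rw [reindex _ fun i hi => by simp [hi]]
    refine Finset.sum_congr rfl fun k _ => ?_
    rcases le_total (I (e k)).1 (I (e k)).2 with h | h <;>
      simp [s, t, h, Real.dist_eq, abs_sub_comm]
  exact hsum ▸ hfδ _ s t hst hdisj' (hlen' ▸ hlen)

theorem AbsolutelyContinuousOnInterval.edist_le_lintegral_deriv {f : ℝ → ℝ} {x y : ℝ}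
    (hxy : x ≤ y) (hf : AbsolutelyContinuousOnInterval f x y) :
    edist (f x) (f y) ≤ ∫⁻ z in Ioc x y, ‖deriv f z‖ₑ := by
  rw [edist_comm, edist_eq_enorm_sub, ← hf.integral_deriv_eq_sub,
    intervalIntegral.integral_of_le hxy]
  exact enorm_integral_le_lintegral_enorm _

section ImageBound

variable {f : ℝ → ℝ} {g : ℝ → ℝ≥0∞}

theorem Set.OrdConnected.volume_image_le_lintegral {C : Set ℝ} (hC : C.OrdConnected)
    (hfg : ∀ x ∈ C, ∀ y ∈ C, x ≤ y → edist (f x) (f y) ≤ ∫⁻ z in Ioc x y, g z) :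
    volume (f '' C) ≤ ∫⁻ z in C, g z := by
  refine (Real.volume_le_diam _).trans (Metric.ediam_le ?_)
  rintro _ ⟨x, hx, rfl⟩ _ ⟨y, hy, rfl⟩
  wlog hxy : x ≤ y generalizing x y
  · exact edist_comm (f x) (f y) ▸ this y hy x hx (le_of_not_ge hxy)
  exact (hfg x hx y hy hxy).trans
    (lintegral_mono_set (Ioc_subset_Icc_self.trans (hC.out hx hy)))

theorem IsOpen.volume_image_le_lintegral {U : Set ℝ} (hU : IsOpen U)
    (hfg : ∀ x y, x ≤ y → Icc x y ⊆ U → edist (f x) (f y) ≤ ∫⁻ z in Ioc x y, g z) :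
    volume (f '' U) ≤ ∫⁻ z in U, g z := by
  set 𝒞 := connectedComponentIn U '' U
  have hdisj : 𝒞.PairwiseDisjoint id := by
    rintro _ ⟨x, -, rfl⟩ _ ⟨y, -, rfl⟩ hne
    exact Set.disjoint_left.2 fun z hzx hzy =>
      hne ((connectedComponentIn_eq hzx).trans (connectedComponentIn_eq hzy).symm)
  have hopen : ∀ C ∈ 𝒞, IsOpen C := by
    rintro _ ⟨x, -, rfl⟩
    exact hU.connectedComponentIn
  have hcount : 𝒞.Countable := hdisj.countable_of_isOpen hopen (by
    rintro _ ⟨x, hx, rfl⟩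
    exact ⟨x, mem_connectedComponentIn hx⟩)
  have hunion : U = ⋃ C ∈ 𝒞, C := by
    refine (Set.Subset.antisymm (fun x hx => ?_) (iUnion₂_subset ?_))
    · exact mem_biUnion (mem_image_of_mem _ hx) (mem_connectedComponentIn hx)
    · rintro _ ⟨x, -, rfl⟩
      exact connectedComponentIn_subset U x
  have hcomp : ∀ C ∈ 𝒞, volume (f '' C) ≤ ∫⁻ z in C, g z := by
    rintro _ ⟨x, -, rfl⟩
    refine isPreconnected_connectedComponentIn.ordConnected.volume_image_le_lintegral
      fun y hy z hz hyz => hfg y z hyz ?_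
    exact (isPreconnected_connectedComponentIn.ordConnected.out hy hz).trans
      (connectedComponentIn_subset U x)
  calc volume (f '' U) = volume (⋃ C ∈ 𝒞, f '' C) := by rw [hunion, image_iUnion₂]
    _ ≤ ∑' C : 𝒞, volume (f '' C) := measure_biUnion_le _ hcount _
    _ ≤ ∑' C : 𝒞, ∫⁻ z in C, g z := ENNReal.tsum_le_tsum fun C => hcomp C C.2
    _ = ∫⁻ z in U, g z := by
      rw [hunion, lintegral_biUnion hcount (fun C hC => (hopen C hC).measurableSet) hdisj]

end ImageBound

theorem ofReal_abs_sub_le_lintegral_deriv_sdiff {f : ℝ → ℝ} {A : Set ℝ} {s t : ℝ}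
    (hst : s ≤ t) (hf : ContinuousOn f (Icc s t)) (hA : IsClosed A) (himg : volume (f '' A) = 0)
    (hac : ∀ x y, x ≤ y → Icc x y ⊆ Ioo s t \ A → AbsolutelyContinuousOnIcc f x y) :
    ENNReal.ofReal |f t - f s| ≤ ∫⁻ z in Ioo s t \ A, ‖deriv f z‖ₑ := by
  have hcover : Icc s t ⊆ {s, t} ∪ A ∪ (Ioo s t \ A) := by
    intro x ⟨hsx, hxt⟩
    simp only [mem_union, mem_insert_iff, mem_singleton_iff, Set.mem_sdiff, mem_Ioo]
    grind
  calc ENNReal.ofReal |f t - f s| = volume (uIcc (f s) (f t)) := Real.volume_interval.symm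
    _ ≤ volume (f '' Icc s t) := by
      refine measure_mono ?_
      have := intermediate_value_uIcc (uIcc_of_le hst ▸ hf)
      rwa [uIcc_of_le hst] at this
    _ ≤ volume (f '' {s, t}) + volume (f '' A) + volume (f '' (Ioo s t \ A)) := by
      grw [image_mono hcover, image_union, image_union, measure_union_le, measure_union_le]
    _ = volume (f '' (Ioo s t \ A)) := by
      rw [((finite_singleton t).insert s).image f |>.measure_zero, himg, zero_add, zero_add]
    _ ≤ ∫⁻ z in Ioo s t \ A, ‖deriv f z‖ₑ :=
      (isOpen_Ioo.sdiff hA).volume_image_le_lintegral fun x y hxy hsub =>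
        ((hac x y hxy hsub).absolutelyContinuousOnInterval hxy).edist_le_lintegral_deriv hxy

theorem absolutelyContinuousOnIcc_of_abs_sub_le_lintegral {f : ℝ → ℝ} {g : ℝ → ℝ≥0∞}
    {a b : ℝ} (hg : ∫⁻ x, g x ≠ ∞)
    (hfg : ∀ s t, a ≤ s → s < t → t ≤ b →
      ENNReal.ofReal |f t - f s| ≤ ∫⁻ x in Ioo s t, g x) :
    AbsolutelyContinuousOnIcc f a b := by
  intro ε hε
  obtain ⟨η, hη, hgη⟩ :=
    exists_pos_setLIntegral_lt_of_measure_lt hg (ENNReal.ofReal_pos.2 hε).ne'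
  obtain ⟨δ, -, hδ, hδη⟩ := ENNReal.lt_iff_exists_real_btwn.1 hη
  refine ⟨δ, ENNReal.ofReal_pos.1 hδ, fun m s t hst hdisj hlen => ?_⟩
  have hvol : volume (⋃ i, Ioo (s i) (t i)) < η :=
    calc volume (⋃ i, Ioo (s i) (t i)) ≤ ∑ i, volume (Ioo (s i) (t i)) :=
          measure_iUnion_fintype_le _ _
      _ = ENNReal.ofReal (∑ i, (t i - s i)) := by
          rw [ENNReal.ofReal_sum_of_nonneg fun i _ => sub_nonneg.2 (hst i).2.1.le]
          simp only [Real.volume_Ioo]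
      _ < ENNReal.ofReal δ := (ENNReal.ofReal_lt_ofReal_iff (ENNReal.ofReal_pos.1 hδ)).2 hlen
      _ < η := hδη
  rw [← ENNReal.ofReal_lt_ofReal_iff hε, ENNReal.ofReal_sum_of_nonneg fun i _ => abs_nonneg _]
  calc ∑ i, ENNReal.ofReal |f (t i) - f (s i)| ≤ ∑ i, ∫⁻ x in Ioo (s i) (t i), g x :=
        Finset.sum_le_sum fun i _ => hfg _ _ (hst i).1 (hst i).2.1 (hst i).2.2
    _ = ∫⁻ x in ⋃ i, Ioo (s i) (t i), g x := by
        rw [lintegral_iUnion (fun i => measurableSet_Ioo) hdisj, tsum_fintype]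
    _ < ENNReal.ofReal ε := hgη _ hvol

theorem statement15_general (f : ℝ → ℝ) (A : Set ℝ)
    (hf : ContinuousOn f (Ioo 0 1)) (hA : IsCompact A)
    (hac : ∀ a b : ℝ, a ≤ b → Icc a b ⊆ Ioo 0 1 \ A → AbsolutelyContinuousOnIcc f a b)
    (hint : ∫⁻ x in Ioo 0 1 \ A, ENNReal.ofReal |deriv f x| < ⊤)
    (himg : volume (f '' A) = 0) :
    ∀ a b : ℝ, a ≤ b → Icc a b ⊆ Ioo 0 1 → AbsolutelyContinuousOnIcc f a b := by
  intro a b _ hsub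
  have hW : MeasurableSet (Ioo 0 1 \ A) := measurableSet_Ioo.diff hA.isClosed.measurableSet
  refine absolutelyContinuousOnIcc_of_abs_sub_le_lintegral
    (g := (Ioo 0 1 \ A).indicator fun x => ‖deriv f x‖ₑ) ?_ fun s t has hst htb => ?_
  · simpa only [lintegral_indicator hW, Real.enorm_eq_ofReal_abs] using hint.ne
  have hst01 : Icc s t ⊆ Ioo 0 1 := (Icc_subset_Icc has htb).trans hsub
  have hsplit : (Ioo 0 1 \ A) ∩ Ioo s t = Ioo s t \ A := by
    rw [inter_comm, ← inter_sdiff_assoc, inter_eq_left.2 (Ioo_subset_Icc_self.trans hst01)]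
  rw [setLIntegral_indicator hW, hsplit]
  exact ofReal_abs_sub_le_lintegral_deriv_sdiff hst.le (hf.mono hst01) hA.isClosed himg
    fun x y hxy hxy_sub => hac x y hxy
      (hxy_sub.trans (sdiff_subset_sdiff_left (Ioo_subset_Icc_self.trans hst01)))

theorem statement15 (f : ℝ → ℝ) (A : Set ℝ)
    (hf : ContinuousOn f (Ioo 0 1)) (hA : IsCompact A) (hA' : A ⊆ Ioo 0 1)
    (hac : ∀ a b : ℝ, a ≤ b → Icc a b ⊆ Ioo 0 1 \ A → AbsolutelyContinuousOnIcc f a b)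
    (hdiff : ∀ᵐ x : ℝ, x ∈ Ioo 0 1 \ A → DifferentiableAt ℝ f x)
    (hint : ∫⁻ x in Ioo 0 1 \ A, ENNReal.ofReal |deriv f x| < ⊤)
    (himg : volume (f '' A) = 0) :
    ∀ a b : ℝ, a ≤ b → Icc a b ⊆ Ioo 0 1 → AbsolutelyContinuousOnIcc f a b :=
  statement15_general f A hf hA hac hint himg
end
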